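/- arXiv:math/0312453 — 8 statements merged into one kernel-verified Lean document; each statement's English description precedes it below -/
import Mathlib

section
/- Let n ≥ 1 be an integer, let a be a complex number with Re a > −1, and let f : ℝ^n → ℂ be a measurable function that is homogeneous of degree a − n on the positive orthant, i.e. f(λx) = λ^{a−n} f(x) for all λ > 0 and all x ∈ (0,∞)^n, where λ^{a−n} = exp((a−n)·log λ). Assume f is absolutely integrable on Ω_n. Then Γ(a+1) · ∫_{Ω_n} f(x) dx = ∫_{(0,∞)^n} f(y) · e^{−∑_{i=1}^n y_i} dy, both integrals being with respect to Lebesgue measure on ℝ^n and the right-hand integral converging. -/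
/-!
Consider `K(s, y) = e^{-s} f(y)` on the region `{(s, y) : y > 0, ∑ yᵢ ≤ s}`. Integrating out `s`
first gives `f(y) e^{-∑ yᵢ}` on the positive orthant. Integrating out `y` first gives
`e^{-s} ∫_{sΩ} f = e^{-s} s^a ∫_Ω f`, because `f` is homogeneous of degree `a - n` and the
Jacobian of `x ↦ s • x` is `s^n`; in `s` this is Euler's integral for `Γ(a + 1)`. The same
scaling for `‖f‖` (degree `Re a - n`) shows `K` is integrable when `Re a > -1`, so Fubini
applies. The boundary faces `{xᵢ = 0}` of `Ω` are null, so `Ω` may be replaced by its part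
in the open orthant, where the homogeneity holds.
-/

open MeasureTheory Finset Set Pointwise Module

section Scaling

variable {E F : Type*} [NormedAddCommGroup E] [NormedSpace ℝ E] [FiniteDimensional ℝ E]
  [MeasurableSpace E] [BorelSpace E] (μ : Measure E) [μ.IsAddHaarMeasure] [NormedAddCommGroup F]

theorem integrableOn_smul_set_iff {f : E → F} {s : Set E} {t : ℝ} (ht : t ≠ 0) :
    IntegrableOn f (t • s) μ ↔ IntegrableOn (fun x => f (t • x)) s μ := by
  let e : E ≃ᵐ E := (Homeomorph.smul (Units.mk0 t ht)).toMeasurableEquiv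
  have hpre : e ⁻¹' (t • s) = s := by
    change (fun x => t • x) ⁻¹' (t • s) = s
    rw [preimage_smul₀ ht, inv_smul_smul₀ ht]
  have hc : ENNReal.ofReal |(t ^ finrank ℝ E)⁻¹| ≠ 0 := by simp [ht]
  have hmap := integrableOn_map_equiv e (f := f) (μ := μ) (s := t • s)
  rw [hpre] at hmap
  refine Iff.trans ?_ hmap
  change _ ↔ IntegrableOn f (t • s) (μ.map (fun x => t • x))
  rw [Measure.map_addHaar_smul μ ht, IntegrableOn, IntegrableOn, Measure.restrict_smul,
    integrable_smul_measure hc ENNReal.ofReal_ne_top]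

theorem setIntegral_smul_set_eq_of_comp_smul {𝕜 : Type*} [RCLike 𝕜] {f : E → 𝕜} {s : Set E}
    (hs : MeasurableSet s) {t : ℝ} (ht : 0 < t) {c : 𝕜} (hf : ∀ x ∈ s, f (t • x) = c * f x) :
    ∫ x in t • s, f x ∂μ = (t ^ finrank ℝ E : ℝ) * c * ∫ x in s, f x ∂μ := by
  have h := Measure.setIntegral_comp_smul_of_pos μ f s ht
  rw [setIntegral_congr_fun hs hf, integral_const_mul] at h
  rw [mul_assoc, h, RCLike.real_smul_eq_coe_mul, ← mul_assoc, ← RCLike.ofReal_mul,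
    mul_inv_cancel₀ (pow_pos ht _).ne', RCLike.ofReal_one, one_mul]

end Scaling

def posSimplex (n : ℕ) (s : ℝ) : Set (Fin n → ℝ) := {y | (∀ i, 0 < y i) ∧ ∑ i, y i ≤ s}

section PosSimplex

variable {n : ℕ}

theorem measurableSet_posOrthant : MeasurableSet {y : Fin n → ℝ | ∀ i, 0 < y i} := by
  simpa only [ofPred_forall] using
    MeasurableSet.iInter fun i => measurableSet_lt measurable_const (measurable_pi_apply i)

theorem measurableSet_posSimplex (s : ℝ) : MeasurableSet (posSimplex n s) :=
  measurableSet_posOrthant.inter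
    (measurableSet_le (f := fun y : Fin n → ℝ => ∑ i, y i) (by fun_prop) measurable_const)

theorem smul_posSimplex_one {t : ℝ} (ht : 0 < t) : t • posSimplex n 1 = posSimplex n t := by
  ext y
  simp only [mem_smul_set_iff_inv_smul_mem₀ ht.ne', posSimplex, mem_ofPred_eq, Pi.smul_apply,
    smul_eq_mul, ← Finset.mul_sum, inv_mul_le_iff₀ ht, mul_one, inv_pos.2 ht,
    mul_pos_iff_of_pos_left]

theorem posSimplex_eq_empty {s : ℝ} (hs : s < 0) : posSimplex n s = ∅ :=
  eq_empty_of_forall_notMem fun _ hy =>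
    (Finset.sum_nonneg fun i _ => (hy.1 i).le).not_gt (hy.2.trans_lt hs)

theorem posSimplex_one_ae_eq :
    posSimplex n 1 =ᵐ[volume] {x : Fin n → ℝ | (∀ i, 0 ≤ x i) ∧ ∑ i, x i ≤ 1} := by
  have hsub : posSimplex n 1 ⊆ {x | (∀ i, 0 ≤ x i) ∧ ∑ i, x i ≤ 1} :=
    fun _ hx => ⟨fun i => (hx.1 i).le, hx.2⟩
  refine ae_eq_set.2 ⟨by rw [sdiff_eq_empty.2 hsub, measure_empty],
    measure_mono_null (fun x hx => ?_) (measure_iUnion_null fun i =>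
      Measure.pi_hyperplane (fun _ => volume) i 0)⟩
  obtain ⟨⟨hnonneg, hsum⟩, hx⟩ := hx
  simp only [posSimplex, mem_ofPred_eq, hsum, and_true, not_forall, not_lt] at hx
  obtain ⟨i, hi⟩ := hx
  exact mem_iUnion.2 ⟨i, le_antisymm hi (hnonneg i)⟩

end PosSimplex

section Homogeneous

variable {n : ℕ}

def IsHomogeneousOnPosOrthant (d : ℂ) (f : (Fin n → ℝ) → ℂ) : Prop :=
  ∀ l : ℝ, 0 < l → ∀ x : Fin n → ℝ, (∀ i, 0 < x i) → f (l • x) = (l : ℂ) ^ d * f x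

variable {a : ℂ} {f : (Fin n → ℝ) → ℂ}

theorem integrableOn_posSimplex (hf : IsHomogeneousOnPosOrthant (a - n) f)
    (h1 : IntegrableOn f (posSimplex n 1)) {t : ℝ} (ht : 0 < t) :
    IntegrableOn f (posSimplex n t) := by
  rw [← smul_posSimplex_one ht, integrableOn_smul_set_iff volume ht.ne']
  exact IntegrableOn.congr_fun (h1.const_mul _) (fun x hx => (hf t ht x hx.1).symm)
    (measurableSet_posSimplex 1)

theorem setIntegral_posSimplex (hf : IsHomogeneousOnPosOrthant (a - n) f) {t : ℝ} (ht : 0 < t) :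
    ∫ x in posSimplex n t, f x = (t : ℂ) ^ a * ∫ x in posSimplex n 1, f x := by
  rw [← smul_posSimplex_one ht, setIntegral_smul_set_eq_of_comp_smul volume
    (measurableSet_posSimplex 1) ht fun x hx => hf t ht x hx.1, finrank_fin_fun]
  congr 1
  change ((t ^ n : ℝ) : ℂ) * _ = _
  rw [Complex.ofReal_pow, ← Complex.cpow_natCast,
    ← Complex.cpow_add _ _ (by exact_mod_cast ht.ne'), add_sub_cancel]

theorem setIntegral_norm_posSimplex (hf : IsHomogeneousOnPosOrthant (a - n) f) {t : ℝ}
    (ht : 0 < t) :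
    ∫ x in posSimplex n t, ‖f x‖ = t ^ a.re * ∫ x in posSimplex n 1, ‖f x‖ := by
  have hnorm : ∀ x ∈ posSimplex n 1, ‖f (t • x)‖ = t ^ (a.re - n) * ‖f x‖ := fun x hx => by
    rw [hf t ht x hx.1, norm_mul, Complex.norm_cpow_eq_rpow_re_of_pos ht]
    simp
  rw [← smul_posSimplex_one ht, setIntegral_smul_set_eq_of_comp_smul volume
    (measurableSet_posSimplex 1) ht hnorm, finrank_fin_fun]
  congr 1
  rw [RCLike.ofReal_real_eq_id, id, ← Real.rpow_natCast, ← Real.rpow_add ht, add_sub_cancel]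

end Homogeneous

section Kernel

variable {n : ℕ} (f : (Fin n → ℝ) → ℂ)

noncomputable def simplexKernel (s : ℝ) (y : Fin n → ℝ) : ℂ :=
  (posSimplex n s).indicator (fun y => (Real.exp (-s) : ℂ) * f y) y

theorem integral_simplexKernel (s : ℝ) :
    ∫ y, simplexKernel f s y = Real.exp (-s) * ∫ y in posSimplex n s, f y := by
  simp_rw [simplexKernel]
  rw [integral_indicator (measurableSet_posSimplex s), integral_const_mul]

theorem integral_norm_simplexKernel (s : ℝ) :
    ∫ y, ‖simplexKernel f s y‖ = Real.exp (-s) * ∫ y in posSimplex n s, ‖f y‖ := by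
  simp_rw [simplexKernel, norm_indicator_eq_indicator_norm, norm_mul, Complex.norm_real,
    Real.norm_of_nonneg (Real.exp_pos _).le]
  rw [integral_indicator (measurableSet_posSimplex s), integral_const_mul]

theorem integral_simplexKernel_flip (y : Fin n → ℝ) :
    ∫ s, simplexKernel f s y =
      {y : Fin n → ℝ | ∀ i, 0 < y i}.indicator
        (fun y => f y * Complex.exp (-∑ i, (y i : ℂ))) y := by
  by_cases hy : ∀ i, 0 < y i
  · have hslice : (fun s => simplexKernel f s y) =
        (Ici (∑ i, y i)).indicator (fun s => (Real.exp (-s) : ℂ) * f y) := by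
      ext s
      simp [simplexKernel, posSimplex, indicator, hy]
    rw [hslice, integral_indicator measurableSet_Ici, integral_mul_const, integral_complex_ofReal,
      integral_Ici_eq_integral_Ioi, integral_exp_neg_Ioi,
      indicator_of_mem (show y ∈ {y : Fin n → ℝ | ∀ i, 0 < y i} from hy), mul_comm]
    push_cast
    rfl
  · simp [simplexKernel, posSimplex, hy]

variable {f}

theorem measurable_uncurry_simplexKernel (hf : Measurable f) :
    Measurable (Function.uncurry (simplexKernel f)) := by
  have hset : MeasurableSet {p : ℝ × (Fin n → ℝ) | p.2 ∈ posSimplex n p.1} :=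
    (measurable_snd measurableSet_posOrthant).inter
      (measurableSet_le (f := fun p : ℝ × (Fin n → ℝ) => ∑ i, p.2 i) (by fun_prop) measurable_fst)
  exact Measurable.indicator (f := fun p => (Real.exp (-p.1) : ℂ) * f p.2) (by fun_prop) hset

theorem integrable_simplexKernel {s : ℝ} (h : IntegrableOn f (posSimplex n s)) :
    Integrable (simplexKernel f s) :=
  (integrable_indicator_iff (measurableSet_posSimplex s)).2 (h.const_mul _)

variable {a : ℂ}

theorem integrable_uncurry_simplexKernel (hmeas : Measurable f) (ha : -1 < a.re)
    (hf : IsHomogeneousOnPosOrthant (a - n) f) (h1 : IntegrableOn f (posSimplex n 1)) :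
    Integrable (Function.uncurry (simplexKernel f)) (volume.prod volume) := by
  refine (integrable_prod_iff (measurable_uncurry_simplexKernel hmeas).aestronglyMeasurable).2
    ⟨?_, ?_⟩
  -- `s = 0` is discarded: for `n = 0`, `posSimplex 0 0` is the whole (one-point) space.
  · filter_upwards [Measure.ae_ne volume 0] with s hs
    rcases hs.lt_or_gt with hs | hs
    · simp [simplexKernel, posSimplex_eq_empty hs]
    · exact integrable_simplexKernel (integrableOn_posSimplex hf h1 hs)
  · have hGamma : IntegrableOn
        (fun s => Real.exp (-s) * (s ^ a.re * ∫ y in posSimplex n 1, ‖f y‖)) (Ioi 0) := by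
      have h := (Real.GammaIntegral_convergent (s := a.re + 1) (by linarith)).mul_const
        (∫ y in posSimplex n 1, ‖f y‖)
      simp only [add_sub_cancel_right] at h
      exact IntegrableOn.congr_fun h (fun s _ => mul_assoc _ _ _) measurableSet_Ioi
    refine ((integrable_indicator_iff measurableSet_Ioi).2 hGamma).congr ?_
    filter_upwards [Measure.ae_ne volume 0] with s hs
    simp only [Function.uncurry_apply_pair, integral_norm_simplexKernel]
    rcases hs.lt_or_gt with hs | hs
    · simp [posSimplex_eq_empty hs, hs.le]
    · rw [indicator_of_mem (Set.mem_Ioi.2 hs), setIntegral_norm_posSimplex hf hs]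

theorem integral_integral_simplexKernel (ha : -1 < a.re)
    (hf : IsHomogeneousOnPosOrthant (a - n) f) :
    ∫ s, ∫ y, simplexKernel f s y = Complex.Gamma (a + 1) * ∫ y in posSimplex n 1, f y := by
  have hslice : (fun s => ∫ y, simplexKernel f s y) =ᵐ[volume] (Set.Ioi 0).indicator
      (fun s : ℝ => Real.exp (-s) * (s : ℂ) ^ (a + 1 - 1) * ∫ y in posSimplex n 1, f y) := by
    filter_upwards [Measure.ae_ne volume 0] with s hs
    simp only [integral_simplexKernel]
    rcases hs.lt_or_gt with hs | hs
    · simp [posSimplex_eq_empty hs, hs.le]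
    · rw [indicator_of_mem (Set.mem_Ioi.2 hs), setIntegral_posSimplex hf hs, add_sub_cancel_right,
        mul_assoc]
  rw [integral_congr_ae hslice, integral_indicator measurableSet_Ioi, integral_mul_const,
    ← Complex.GammaIntegral, ← Complex.Gamma_eq_integral (by simp; linarith)]

end Kernel

theorem gamma_homogeneous_simplex_integral_general (n : ℕ) (a : ℂ)
    (ha : -1 < a.re) (f : (Fin n → ℝ) → ℂ) (hmeas : Measurable f)
    (hhom : ∀ l : ℝ, 0 < l → ∀ x : Fin n → ℝ, (∀ i, 0 < x i) →
      f (l • x) = (l : ℂ) ^ (a - (n : ℂ)) * f x)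
    (hint : IntegrableOn f {x : Fin n → ℝ | (∀ i, 0 ≤ x i) ∧ ∑ i, x i ≤ 1}) :
    IntegrableOn (fun y => f y * Complex.exp (-∑ i, (y i : ℂ)))
        {y : Fin n → ℝ | ∀ i, 0 < y i} ∧
      Complex.Gamma (a + 1) *
          ∫ x in {x : Fin n → ℝ | (∀ i, 0 ≤ x i) ∧ ∑ i, x i ≤ 1}, f x =
        ∫ y in {y : Fin n → ℝ | ∀ i, 0 < y i},
          f y * Complex.exp (-∑ i, (y i : ℂ)) := by
  have hK := integrable_uncurry_simplexKernel hmeas ha hhom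
    (hint.congr_set_ae posSimplex_one_ae_eq)
  have hmarginal := funext (integral_simplexKernel_flip f)
  refine ⟨(integrable_indicator_iff measurableSet_posOrthant).1
    (hmarginal ▸ hK.integral_prod_right), ?_⟩
  rw [← setIntegral_congr_set posSimplex_one_ae_eq, ← integral_integral_simplexKernel ha hhom,
    integral_integral_swap hK, hmarginal, integral_indicator measurableSet_posOrthant]

/-- For `f` measurable and homogeneous of degree `a - n` on the positive orthant
(`Re a > -1`), integrable on the simplex `Ω_n`, we have
`Γ(a+1) ∫_{Ω_n} f(x) dx = ∫_{(0,∞)^n} f(y) e^{-∑ y_i} dy`,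
with the right-hand integral converging. -/
theorem gamma_homogeneous_simplex_integral (n : ℕ) (hn : 1 ≤ n) (a : ℂ)
    (ha : -1 < a.re) (f : (Fin n → ℝ) → ℂ) (hmeas : Measurable f)
    (hhom : ∀ l : ℝ, 0 < l → ∀ x : Fin n → ℝ, (∀ i, 0 < x i) →
      f (l • x) = (l : ℂ) ^ (a - (n : ℂ)) * f x)
    (hint : IntegrableOn f {x : Fin n → ℝ | (∀ i, 0 ≤ x i) ∧ ∑ i, x i ≤ 1}) :
    IntegrableOn (fun y => f y * Complex.exp (-∑ i, (y i : ℂ)))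
        {y : Fin n → ℝ | ∀ i, 0 < y i} ∧
      Complex.Gamma (a + 1) *
          ∫ x in {x : Fin n → ℝ | (∀ i, 0 ≤ x i) ∧ ∑ i, x i ≤ 1}, f x =
        ∫ y in {y : Fin n → ℝ | ∀ i, 0 < y i},
          f y * Complex.exp (-∑ i, (y i : ℂ)) :=
  gamma_homogeneous_simplex_integral_general n a ha f hmeas hhom hint
end

section
/- Let n ≥ 1 be an integer and let κ be a complex number with Re κ > 0. Then ∫_{(0,∞)^n} D_n(y²) · D_n(y) · ∏_{i=1}^n y_i^{κ−1} · e^{−∑_{i=1}^n y_i} dy = n! · det( (Γ(2i + j + κ − 3)) )_{i,j=1,…,n}, the determinant of the n×n matrix with (i,j) entry Γ(2i+j+κ−3). -/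
/-!
Both factors are Vandermonde determinants, `D_n(y²) D_n(y) = det (y_k^{2i}) · det (y_k^j)`.
Absorbing the weight `y^{κ-1} e^{-y}` into the rows of the first one, Andréief's identity turns the
integral of a product of two determinants over a product measure into `n!` times the determinant
of the moments `∫₀^∞ y^{κ-1} e^{-y} y^{2i+j} dy = Γ(κ + 2i + j)`.
-/

open MeasureTheory Finset Matrix Equiv

theorem Matrix.sum_perm_sign_mul_sign_mul_prod_eq_factorial_mul_det {R ι : Type*} [CommRing R]
    [Fintype ι] [DecidableEq ι] (K : Matrix ι ι R) :
    ∑ σ : Perm ι, ∑ τ : Perm ι,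
        ((Perm.sign σ : ℤ) : R) * ((Perm.sign τ : ℤ) : R) * ∏ i, K (σ i) (τ i) =
      (Fintype.card ι).factorial * K.det := by
  have row_sum (σ : Perm ι) :
      ∑ τ : Perm ι, ((Perm.sign τ : ℤ) : R) * ∏ i, K (σ i) (τ i) = Perm.sign σ * K.det := by
    rw [← det_permute, ← det_transpose, det_apply']
    rfl
  simp_rw [mul_assoc, ← mul_sum, row_sum, ← mul_assoc, ← Int.cast_mul, ← Units.val_mul,
    Int.units_mul_self, Units.val_one, Int.cast_one, one_mul, sum_const, card_univ,
    Fintype.card_perm, nsmul_eq_mul]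

/-- **Andréief's identity**. -/
theorem MeasureTheory.integral_det_mul_det_eq_factorial_mul_det {𝕜 α ι : Type*} [RCLike 𝕜]
    [MeasurableSpace α] [Fintype ι] [DecidableEq ι] (μ : Measure α) [SigmaFinite μ]
    (f g : ι → α → 𝕜) (hfg : ∀ i j, Integrable (fun t => f i t * g j t) μ) :
    ∫ x : ι → α, (of fun k i => f i (x k)).det * (of fun k j => g j (x k)).det
        ∂(Measure.pi fun _ => μ) =
      ((Fintype.card ι).factorial : 𝕜) * (of fun i j => ∫ t, f i t * g j t ∂μ).det := by
  have expand (x : ι → α) : (of fun k i => f i (x k)).det * (of fun k j => g j (x k)).det =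
      ∑ σ : Perm ι, ∑ τ : Perm ι, ((Perm.sign σ : ℤ) : 𝕜) * ((Perm.sign τ : ℤ) : 𝕜) *
        ∏ k, f (σ k) (x k) * g (τ k) (x k) := by
    rw [← det_transpose, ← det_transpose (of _), det_apply', det_apply', sum_mul_sum]
    simp only [transpose_apply, of_apply, prod_mul_distrib]
    exact sum_congr rfl fun σ _ => sum_congr rfl fun τ _ => by ring
  have term_integrable (σ τ : Perm ι) : Integrable (fun x : ι → α => ((Perm.sign σ : ℤ) : 𝕜) *
      ((Perm.sign τ : ℤ) : 𝕜) * ∏ k, f (σ k) (x k) * g (τ k) (x k)) (Measure.pi fun _ => μ) :=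
    (Integrable.fintype_prod fun k => hfg (σ k) (τ k)).const_mul _
  simp_rw [expand]
  rw [integral_finsetSum _ fun σ _ => integrable_finsetSum _ fun τ _ => term_integrable σ τ,
    ← sum_perm_sign_mul_sign_mul_prod_eq_factorial_mul_det]
  refine sum_congr rfl fun σ _ => ?_
  rw [integral_finsetSum _ fun τ _ => term_integrable σ τ]
  refine sum_congr rfl fun τ _ => ?_
  rw [integral_const_mul, integral_fintype_prod_eq_prod (fun k t => f (σ k) t * g (τ k) t)]
  rfl

theorem Complex.eqOn_GammaIntegrand_cpow_mul_exp_neg_mul_pow (κ : ℂ) (m : ℕ) :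
    Set.EqOn (fun t : ℝ => ((-t).exp : ℂ) * (t : ℂ) ^ (κ + m - 1))
      (fun t : ℝ => (t : ℂ) ^ (κ - 1) * exp (-t) * (t : ℂ) ^ m) (Set.Ioi 0) := by
  intro t ht
  have ht0 : (t : ℂ) ≠ 0 := ofReal_ne_zero.mpr (ne_of_gt ht)
  simp only [show κ + m - 1 = m + (κ - 1) by ring, cpow_add _ _ ht0, cpow_natCast,
    ofReal_exp, ofReal_neg]
  ring

theorem Complex.add_natCast_re_pos {κ : ℂ} (hκ : 0 < κ.re) (m : ℕ) : 0 < (κ + m).re := by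
  simpa using add_pos_of_pos_of_nonneg hκ m.cast_nonneg

theorem Complex.integrableOn_cpow_mul_exp_neg_mul_pow {κ : ℂ} (hκ : 0 < κ.re) (m : ℕ) :
    IntegrableOn (fun t : ℝ => (t : ℂ) ^ (κ - 1) * exp (-t) * (t : ℂ) ^ m) (Set.Ioi 0) :=
  (GammaIntegral_convergent (add_natCast_re_pos hκ m)).congr_fun
    (eqOn_GammaIntegrand_cpow_mul_exp_neg_mul_pow κ m) measurableSet_Ioi

theorem Complex.integral_cpow_mul_exp_neg_mul_pow {κ : ℂ} (hκ : 0 < κ.re) (m : ℕ) :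
    ∫ t in Set.Ioi (0 : ℝ), (t : ℂ) ^ (κ - 1) * exp (-t) * (t : ℂ) ^ m = Gamma (κ + m) := by
  rw [← setIntegral_congr_fun measurableSet_Ioi (eqOn_GammaIntegrand_cpow_mul_exp_neg_mul_pow κ m),
    ← GammaIntegral, Gamma_eq_integral (add_natCast_re_pos hκ m)]

/-- Each factor has the opposite sign to the corresponding one in `det_vandermonde`; the two signs
cancel pairwise. -/
theorem Matrix.prod_sq_sub_sq_mul_prod_sub_eq_det_vandermonde_mul_det {R : Type*} [CommRing R]
    {n : ℕ} (v : Fin n → R) :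
    (∏ i : Fin n, ∏ j ∈ Ioi i, (v i ^ 2 - v j ^ 2)) * ∏ i : Fin n, ∏ j ∈ Ioi i, (v i - v j) =
      (vandermonde fun i => v i ^ 2).det * (vandermonde v).det := by
  simp_rw [det_vandermonde, ← prod_mul_distrib]
  exact prod_congr rfl fun i _ => prod_congr rfl fun j _ => by ring

theorem orthant_integrand_eq_det_mul_det {n : ℕ} (κ : ℂ) (y : Fin n → ℝ) :
    ((∏ i : Fin n, ∏ j ∈ Ioi i, ((y i) ^ 2 - (y j) ^ 2) : ℝ) : ℂ) *
          ((∏ i : Fin n, ∏ j ∈ Ioi i, (y i - y j) : ℝ) : ℂ) *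
          (∏ i : Fin n, ((y i : ℂ) ^ (κ - 1))) *
          Complex.exp (-∑ i, (y i : ℂ)) =
      (of fun k (i : Fin n) =>
          (y k : ℂ) ^ (κ - 1) * Complex.exp (-(y k : ℂ)) * (y k : ℂ) ^ (2 * (i : ℕ))).det *
        (of fun k (j : Fin n) => (y k : ℂ) ^ (j : ℕ)).det := by
  push_cast
  rw [prod_sq_sub_sq_mul_prod_sub_eq_det_vandermonde_mul_det, ← sum_neg_distrib,
    Complex.exp_sum, mul_assoc, ← prod_mul_distrib, mul_right_comm, mul_comm (det _),
    ← det_mul_column]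
  congr 2
  ext k i
  simp [pow_mul]

theorem orthant_integral_eq_gamma_det_general (n : ℕ) (κ : ℂ) (hκ : 0 < κ.re) :
    ∫ y in {y : Fin n → ℝ | ∀ i, 0 < y i},
        ((∏ i : Fin n, ∏ j ∈ Finset.Ioi i, ((y i) ^ 2 - (y j) ^ 2) : ℝ) : ℂ) *
          ((∏ i : Fin n, ∏ j ∈ Finset.Ioi i, (y i - y j) : ℝ) : ℂ) *
          (∏ i : Fin n, ((y i : ℂ) ^ (κ - 1))) *
          Complex.exp (-∑ i, (y i : ℂ)) =
      (n.factorial : ℂ) *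
        Matrix.det (Matrix.of fun i j : Fin n =>
          Complex.Gamma (((2 * ((i : ℕ) + 1) + ((j : ℕ) + 1) : ℕ) : ℂ) + κ - 3)) := by
  have orthant : {y : Fin n → ℝ | ∀ i, 0 < y i} = Set.univ.pi fun _ => Set.Ioi 0 := by
    ext; simp
  have moment (i j : Fin n) : (fun t : ℝ => (t : ℂ) ^ (κ - 1) * Complex.exp (-t) *
      (t : ℂ) ^ (2 * (i : ℕ)) * (t : ℂ) ^ (j : ℕ)) =
      fun t : ℝ => (t : ℂ) ^ (κ - 1) * Complex.exp (-t) * (t : ℂ) ^ (2 * (i : ℕ) + j) := by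
    simp only [pow_add, mul_assoc]
  rw [orthant, volume_pi, Measure.restrict_pi_pi]
  simp_rw [orthant_integrand_eq_det_mul_det]
  rw [integral_det_mul_det_eq_factorial_mul_det _
    (fun (i : Fin n) (t : ℝ) => (t : ℂ) ^ (κ - 1) * Complex.exp (-t) * (t : ℂ) ^ (2 * (i : ℕ)))
    (fun (j : Fin n) (t : ℝ) => (t : ℂ) ^ (j : ℕ))
    fun i j => moment i j ▸ Complex.integrableOn_cpow_mul_exp_neg_mul_pow hκ _]
  simp only [moment, Complex.integral_cpow_mul_exp_neg_mul_pow hκ, Fintype.card_fin]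
  congr 3 with i j
  congr 1
  push_cast
  ring

/-- `∫_{(0,∞)^n} D_n(y²) D_n(y) ∏ y_i^{κ-1} e^{-∑ y_i} dy
  = n! · det(Γ(2i + j + κ - 3))_{i,j=1,…,n}`. -/
theorem orthant_integral_eq_gamma_det (n : ℕ) (hn : 1 ≤ n) (κ : ℂ) (hκ : 0 < κ.re) :
    ∫ y in {y : Fin n → ℝ | ∀ i, 0 < y i},
        ((∏ i : Fin n, ∏ j ∈ Finset.Ioi i, ((y i) ^ 2 - (y j) ^ 2) : ℝ) : ℂ) *
          ((∏ i : Fin n, ∏ j ∈ Finset.Ioi i, (y i - y j) : ℝ) : ℂ) *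
          (∏ i : Fin n, ((y i : ℂ) ^ (κ - 1))) *
          Complex.exp (-∑ i, (y i : ℂ)) =
      (n.factorial : ℂ) *
        Matrix.det (Matrix.of fun i j : Fin n =>
          Complex.Gamma (((2 * ((i : ℕ) + 1) + ((j : ℕ) + 1) : ℕ) : ℂ) + κ - 3)) :=
  orthant_integral_eq_gamma_det_general n κ hκ
end

section
/- Let p, n be positive integers with 2n < p. If a polynomial function f on the space M_{p,n}(ℂ) of complex p×n matrices vanishes at every matrix A ∈ M_{p,n}(ℂ) satisfying Aᵀ A = 0 and rank A = n, then f vanishes at every matrix A ∈ M_{p,n}(ℂ) satisfying Aᵀ A = 0. (Equivalently, the full-rank locus of the null cone {A : AᵀA = 0} is Zariski dense in it.) -/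
/-!
A point `A` of the null cone with `rank A < n` lies on a line `A + t • v uᵀ` which stays in the
null cone and on which the rank jumps for `t ≠ 0`: take `v` isotropic, orthogonal to the columns
of `A` and outside their span (possible since `ker Aᵀ` has dimension `p - rank A ≥ rank A + 3`
when `2n < p`), and `u` with `u ⬝ᵥ w ≠ 0` for some `w ≠ 0` in `ker A`. A polynomial vanishing on
such a line for `t ≠ 0` vanishes at `t = 0`, so descending induction on the rank reduces
everything to the full-rank locus.
-/

open Matrix Module

theorem MvPolynomial.eval_eq_zero_of_eval_add_smul_eq_zero {K σ : Type*} [Field K] [Infinite K]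
    {f : MvPolynomial σ K} {x y : σ → K} (h : ∀ t : K, t ≠ 0 → eval (x + t • y) f = 0) :
    eval x f = 0 := by
  set g : Polynomial K :=
    eval₂ Polynomial.C (fun s => Polynomial.C (x s) + Polynomial.X * Polynomial.C (y s)) f
  have hg : ∀ t, g.eval t = eval (x + t • y) f := fun t => by
    rw [polynomial_eval_eval₂]
    congr 1
    · ext; simp
    · ext s
      simp only [Polynomial.eval_add, Polynomial.eval_mul, Polynomial.eval_C, Polynomial.eval_X,
        Pi.add_apply, Pi.smul_apply, smul_eq_mul]
  have : g = 0 := Polynomial.eq_zero_of_infinite_isRoot _ <|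
    (Set.finite_singleton 0).infinite_compl.mono fun t ht => (hg t).trans (h t ht)
  simpa [this] using (hg 0).symm

theorem Submodule.finrank_le_finrank_inf_ker_add_one {K V : Type*} [Field K] [AddCommGroup V]
    [Module K V] [FiniteDimensional K V] (U : Submodule K V) (φ : Dual K V) :
    finrank K U ≤ finrank K ↑(U ⊓ LinearMap.ker φ) + 1 := by
  have h1 := Submodule.finrank_sup_add_finrank_inf_eq U (LinearMap.ker φ)
  have h2 := (U ⊔ LinearMap.ker φ).finrank_le
  have h3 := φ.finrank_range_add_finrank_ker
  have h4 : finrank K (LinearMap.range φ) ≤ 1 := by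
    simpa using (LinearMap.range φ).finrank_le
  omega

section Isotropic

variable {K ι : Type*} [Field K] [IsAlgClosed K] [Fintype ι]

theorem exists_ne_zero_dotProduct_add_smul_self_eq_zero {x y : ι → K} (hxx : x ⬝ᵥ x ≠ 0)
    (hyy : y ⬝ᵥ y ≠ 0) (hxy : x ⬝ᵥ y = 0) : ∃ c : K, c ≠ 0 ∧ (x + c • y) ⬝ᵥ (x + c • y) = 0 := by
  obtain ⟨c, hc⟩ := IsAlgClosed.exists_pow_nat_eq (-(x ⬝ᵥ x) / (y ⬝ᵥ y)) two_pos
  refine ⟨c, ?_, ?_⟩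
  · rintro rfl
    simp [eq_comm, hxx, hyy] at hc
  · have hyx : y ⬝ᵥ x = 0 := by rw [dotProduct_comm, hxy]
    have hc' : c ^ 2 * (y ⬝ᵥ y) = -(x ⬝ᵥ x) := by rw [hc, div_mul_cancel₀ _ hyy]
    simp only [add_dotProduct, dotProduct_add, smul_dotProduct, dotProduct_smul, hxy, hyx,
      smul_eq_mul]
    linear_combination hc'

theorem exists_mem_notMem_dotProduct_self_eq_zero (U W : Submodule K (ι → K))
    (hdim : finrank K W + 3 ≤ finrank K U) : ∃ v ∈ U, v ∉ W ∧ v ⬝ᵥ v = 0 := by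
  -- A non-isotropic `x ∈ U \ W` is corrected by some `y ∈ U ∩ xᗮ` outside `W ⊔ K ∙ x`.
  obtain ⟨x, hxU, hxW⟩ := SetLike.not_le_iff_exists.mp fun hle : U ≤ W => by
    have := Submodule.finrank_mono hle; omega
  by_cases hxx : x ⬝ᵥ x = 0
  · exact ⟨x, hxU, hxW, hxx⟩
  let W' := W ⊔ K ∙ x
  have hW' : finrank K W' ≤ finrank K W + 1 :=
    (Submodule.finrank_add_le_finrank_add_finrank _ _).trans
      (by rw [finrank_span_singleton (ne_of_mem_of_not_mem W.zero_mem hxW).symm])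
  have hU' := U.finrank_le_finrank_inf_ker_add_one (dotProductBilin K K x)
  obtain ⟨y, ⟨hyU, hxy⟩, hyW'⟩ := SetLike.not_le_iff_exists.mp
    fun hle : U ⊓ LinearMap.ker (dotProductBilin K K x) ≤ W' => by
      have := Submodule.finrank_mono hle; omega
  replace hxy : x ⬝ᵥ y = 0 := hxy
  by_cases hyy : y ⬝ᵥ y = 0
  · exact ⟨y, hyU, fun hyW => hyW' (Submodule.mem_sup_left hyW), hyy⟩
  obtain ⟨c, hc, hv⟩ := exists_ne_zero_dotProduct_add_smul_self_eq_zero hxx hyy hxy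
  refine ⟨x + c • y, U.add_mem hxU (U.smul_mem c hyU), fun hvW => hyW' ?_, hv⟩
  have : c • y ∈ W' := by
    simpa using W'.sub_mem (Submodule.mem_sup_left hvW)
      (Submodule.mem_sup_right (Submodule.mem_span_singleton_self x))
  exact (W'.smul_mem_iff hc).mp this

end Isotropic

namespace Matrix

variable {K m n : Type*}

theorem transpose_mul_self_add_vecMulVec_eq_zero [CommRing K] [Fintype m] {A : Matrix m n K}
    {v : m → K} (hA : Aᵀ * A = 0) (hv : Aᵀ *ᵥ v = 0) (hvv : v ⬝ᵥ v = 0) (u : n → K) :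
    (A + vecMulVec v u)ᵀ * (A + vecMulVec v u) = 0 := by
  rw [transpose_add, transpose_vecMulVec, Matrix.add_mul, Matrix.mul_add, Matrix.mul_add, hA,
    mul_vecMulVec, hv, vecMulVec_mul, ← mulVec_transpose, hv, vecMulVec_mul_vecMulVec, hvv]
  simp

variable [Field K] [Fintype n]

theorem rank_add_finrank_ker_mulVecLin (A : Matrix m n K) :
    A.rank + finrank K (LinearMap.ker A.mulVecLin) = Fintype.card n :=
  A.mulVecLin.finrank_range_add_finrank_ker.trans (finrank_fintype_fun_eq_card K)

theorem exists_ne_zero_mulVec_eq_zero_of_rank_lt {A : Matrix m n K}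
    (hr : A.rank < Fintype.card n) : ∃ w : n → K, w ≠ 0 ∧ A *ᵥ w = 0 := by
  have hker : LinearMap.ker A.mulVecLin ≠ ⊥ := fun hbot => by
    have := A.rank_add_finrank_ker_mulVecLin
    rw [hbot, finrank_bot] at this
    omega
  obtain ⟨w, hw, hw0⟩ := Submodule.exists_mem_ne_zero_of_ne_bot hker
  exact ⟨w, hw0, hw⟩

theorem rank_lt_rank_add_vecMulVec {A : Matrix m n K} {v : m → K} {u w : n → K}
    (hv : v ∉ LinearMap.range A.mulVecLin) (hw : A *ᵥ w = 0) (huw : u ⬝ᵥ w ≠ 0) :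
    A.rank < (A + vecMulVec v u).rank := by
  have hmulVec : ∀ x, (A + vecMulVec v u) *ᵥ x = A *ᵥ x + (u ⬝ᵥ x) • v := fun x => by
    rw [add_mulVec, vecMulVec_mulVec, op_smul_eq_smul]
  refine Submodule.finrank_lt_finrank_of_lt <| SetLike.lt_iff_le_and_exists.2 ⟨?_, v, ?_, hv⟩
  · rintro _ ⟨x, rfl⟩
    refine ⟨x - (u ⬝ᵥ x) • (u ⬝ᵥ w)⁻¹ • w, ?_⟩
    simp only [mulVecLin_apply, hmulVec]
    simp [mulVec_sub, mulVec_smul, hw, dotProduct_sub, huw]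
  · refine ⟨(u ⬝ᵥ w)⁻¹ • w, ?_⟩
    simp only [mulVecLin_apply, hmulVec]
    simp [mulVec_smul, hw, huw]

theorem exists_line_transpose_mul_self_eq_zero_rank_lt [Fintype m] [IsAlgClosed K]
    {A : Matrix m n K} (hmn : 2 * Fintype.card n < Fintype.card m) (hA : Aᵀ * A = 0)
    (hr : A.rank < Fintype.card n) :
    ∃ B : Matrix m n K, ∀ t : K, t ≠ 0 →
      (A + t • B)ᵀ * (A + t • B) = 0 ∧ A.rank < (A + t • B).rank := by
  have hker := Aᵀ.rank_add_finrank_ker_mulVecLin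
  rw [rank_transpose] at hker
  obtain ⟨v, hv, hvA, hvv⟩ := exists_mem_notMem_dotProduct_self_eq_zero
    (LinearMap.ker Aᵀ.mulVecLin) (LinearMap.range A.mulVecLin) (by change A.rank + 3 ≤ _; omega)
  obtain ⟨w, hw0, hw⟩ := exists_ne_zero_mulVec_eq_zero_of_rank_lt hr
  obtain ⟨u, huw⟩ : ∃ u : n → K, u ⬝ᵥ w ≠ 0 := by
    by_contra! h
    exact hw0 (dotProduct_eq_zero_iff.mp fun u => by rw [dotProduct_comm, h])
  refine ⟨vecMulVec v u, fun t ht => ?_⟩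
  rw [← vecMulVec_smul]
  have htuw : (t • u) ⬝ᵥ w ≠ 0 := by simpa [smul_dotProduct, ht]
  exact ⟨transpose_mul_self_add_vecMulVec_eq_zero hA hv hvv _,
    rank_lt_rank_add_vecMulVec hvA hw htuw⟩

end Matrix

theorem nullcone_full_rank_locus_dense_general (p n : ℕ)
    (h : 2 * n < p) (f : MvPolynomial (Fin p × Fin n) ℂ)
    (hf : ∀ A : Matrix (Fin p) (Fin n) ℂ, Aᵀ * A = 0 → A.rank = n →
      MvPolynomial.eval (fun v => A v.1 v.2) f = 0) :
    ∀ A : Matrix (Fin p) (Fin n) ℂ, Aᵀ * A = 0 →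
      MvPolynomial.eval (fun v => A v.1 v.2) f = 0 := by
  suffices ∀ k, ∀ A : Matrix (Fin p) (Fin n) ℂ, Aᵀ * A = 0 → n - A.rank = k →
      MvPolynomial.eval (fun v => A v.1 v.2) f = 0 from fun A hA => this _ A hA rfl
  intro k
  induction k using Nat.strong_induction_on with
  | _ k ih =>
    intro A hA hk
    obtain hr | hr := A.rank_le_width.lt_or_eq
    · obtain ⟨B, hB⟩ := exists_line_transpose_mul_self_eq_zero_rank_lt (by simpa using h) hA
        (by simpa using hr)
      refine MvPolynomial.eval_eq_zero_of_eval_add_smul_eq_zero (y := fun v => B v.1 v.2)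
        fun t ht => ?_
      obtain ⟨hnull, hrank⟩ := hB t ht
      exact ih _ (by omega) (A + t • B) hnull rfl
    · exact hf A hA hr

/-- If a polynomial function on `M_{p,n}(ℂ)` (with `2n < p`) vanishes on the full-rank
locus of the null cone `{A : AᵀA = 0}`, then it vanishes on the whole null cone. -/
theorem nullcone_full_rank_locus_dense (p n : ℕ) (hp : 0 < p) (hn : 0 < n)
    (h : 2 * n < p) (f : MvPolynomial (Fin p × Fin n) ℂ)
    (hf : ∀ A : Matrix (Fin p) (Fin n) ℂ, Aᵀ * A = 0 → A.rank = n →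
      MvPolynomial.eval (fun v => A v.1 v.2) f = 0) :
    ∀ A : Matrix (Fin p) (Fin n) ℂ, Aᵀ * A = 0 →
      MvPolynomial.eval (fun v => A v.1 v.2) f = 0 :=
  nullcone_full_rank_locus_dense_general p n h f hf
end

section
/- Let p, n be positive integers with 2n < p, and let A, A' ∈ M_{p,n}(ℂ) satisfy AᵀA = 0, A'ᵀA' = 0 and rank A = rank A'. Then there exist a complex orthogonal matrix k ∈ O(p,ℂ) (i.e. k ∈ M_p(ℂ) with kᵀk = 1_p) and g ∈ GL_n(ℂ) such that A' = k A gᵀ. (That is, the O(p,ℂ) × GL_n(ℂ)-orbits in the null cone {A : AᵀA = 0} under the action (k,g)·A = kAgᵀ are exactly classified by rank.) -/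
/-!
Factor `A = B C` with `B` of full column rank `r = rank A` and `C` of full row rank. Then
`AᵀA = 0` forces `BᵀB = 0`: the columns of `B` span a totally isotropic subspace. As `2r ≤ p`,
`B` extends to a basis of `ℂᵖ` with a fixed Gram matrix: add columns `D` with `BᵀD = 1`,
`DᵀD = 0` (a hyperbolic partner), then an orthonormal basis of the orthogonal complement of
`[B D]`, which exists because a nondegenerate symmetric form over `ℂ` is a sum of squares.
Two bases with the same Gram matrix differ by an orthogonal `k`, so `k B = B'`, while two
matrices `C`, `C'` of full row rank differ by an invertible factor on the right.
-/

open Matrix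

namespace Matrix

-- Gram matrix of the hyperbolic space on `Kˡ ⊕ Kˡ` orthogonally summed with `(Kᵒ, ⬝ᵥ)`
def hyperbolicGram (K l o : Type*) [Field K] [DecidableEq l] [DecidableEq o] :
    Matrix ((l ⊕ l) ⊕ o) ((l ⊕ l) ⊕ o) K :=
  fromBlocks (fromBlocks 0 1 1 0) 0 0 1

theorem transpose_hyperbolicGram (K l o : Type*) [Field K] [DecidableEq l] [DecidableEq o] :
    (hyperbolicGram K l o)ᵀ = hyperbolicGram K l o := by
  simp [hyperbolicGram, fromBlocks_transpose]

variable {K : Type*} [Field K] {l m n o : Type*} [Fintype l] [Fintype m] [Fintype n] [Fintype o]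

theorem rank_eq_card_of_mul_eq_one [DecidableEq m] {A : Matrix m n K} {B : Matrix n m K}
    (h : A * B = 1) : A.rank = Fintype.card m :=
  le_antisymm A.rank_le_card_height (by simpa [h, rank_one] using rank_mul_le_left A B)

theorem exists_right_inverse_of_rank_eq_card [DecidableEq m] {A : Matrix m n K}
    (h : A.rank = Fintype.card m) : ∃ B : Matrix n m K, A * B = 1 := by
  refine mulVec_surjective_iff_exists_right_inverse.mp ?_
  have : LinearMap.range A.mulVecLin = ⊤ :=
    Submodule.eq_top_of_finrank_eq (by rw [← rank, h, Module.finrank_fintype_fun_eq_card])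
  exact LinearMap.range_eq_top.mp this

theorem exists_left_inverse_of_rank_eq_card [DecidableEq n] {A : Matrix m n K}
    (h : A.rank = Fintype.card n) : ∃ B : Matrix n m K, B * A = 1 := by
  obtain ⟨B, hB⟩ := exists_right_inverse_of_rank_eq_card (A := Aᵀ) (by rwa [rank_transpose])
  exact ⟨Bᵀ, by simpa using congrArg transpose hB⟩

theorem exists_range_mulVecLin_eq [DecidableEq o] (S : Submodule K (m → K))
    (hS : Module.finrank K S = Fintype.card o) :
    ∃ W : Matrix m o K, LinearMap.range W.mulVecLin = S := by
  let e : S ≃ₗ[K] (o → K) := LinearEquiv.ofFinrankEq _ _ (by simpa using hS)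
  refine ⟨LinearMap.toMatrix' (S.subtype ∘ₗ e.symm.toLinearMap), ?_⟩
  rw [← Matrix.toLin'_apply', Matrix.toLin'_toMatrix', LinearMap.range_comp,
    LinearEquiv.range, Submodule.map_top, Submodule.range_subtype]

theorem exists_complement_of_mul_eq_one [DecidableEq m] [DecidableEq n] [DecidableEq o]
    {C : Matrix n m K} {R : Matrix m n K} (hCR : C * R = 1)
    (hcard : Fintype.card n + Fintype.card o = Fintype.card m) :
    ∃ (N : Matrix m o K) (P : Matrix o m K),
      C * N = 0 ∧ P * R = 0 ∧ P * N = 1 ∧ R * C + N * P = 1 := by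
  have hker : Module.finrank K (LinearMap.ker C.mulVecLin) = Fintype.card o := by
    have := C.mulVecLin.finrank_range_add_finrank_ker
    rw [← rank, rank_eq_card_of_mul_eq_one hCR, Module.finrank_fintype_fun_eq_card] at this
    omega
  obtain ⟨N, hN⟩ := exists_range_mulVecLin_eq _ hker
  have hCN : C * N = 0 := by
    apply Matrix.toLin'.injective
    rw [map_zero, Matrix.toLin'_mul, Matrix.toLin'_apply', Matrix.toLin'_apply',
      ← LinearMap.range_le_ker_iff, hN]
  obtain ⟨N', hN'⟩ := exists_left_inverse_of_rank_eq_card (A := N) (by rw [rank, hN, hker])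
  set P := N' * (1 - R * C)
  have hPR : P * R = 0 := by simp [P, Matrix.mul_sub, Matrix.sub_mul, Matrix.mul_assoc, hCR]
  have hPN : P * N = 1 := by simp [P, Matrix.mul_sub, Matrix.sub_mul, Matrix.mul_assoc, hCN, hN']
  refine ⟨N, P, hCN, hPR, hPN, ?_⟩
  -- `fromRows C P` is a left inverse of the square matrix `fromCols R N`, hence a right inverse
  have e : m ≃ n ⊕ o := Fintype.equivOfCardEq (by simp [hcard])
  rw [← fromCols_mul_fromRows, fromCols_mul_fromRows_eq_one_comm e, fromRows_mul_fromCols,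
    hCR, hCN, hPR, hPN, fromBlocks_one]

theorem exists_isUnit_mul_eq_of_mul_eq_one [DecidableEq l] [DecidableEq n]
    {C C' : Matrix l n K} {R R' : Matrix n l K} (hCR : C * R = 1) (hCR' : C' * R' = 1) :
    ∃ M : Matrix n n K, IsUnit M ∧ C' = C * M := by
  obtain ⟨o, _, _, hcard⟩ : ∃ (o : Type) (_ : Fintype o) (_ : DecidableEq o),
      Fintype.card l + Fintype.card o = Fintype.card n := by
    have := rank_eq_card_of_mul_eq_one hCR ▸ C.rank_le_card_width
    exact ⟨Fin (Fintype.card n - Fintype.card l), inferInstance, inferInstance, by simp; omega⟩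
  obtain ⟨N, P, hCN, hPR, hPN, hRN⟩ := exists_complement_of_mul_eq_one hCR hcard
  obtain ⟨N', P', hCN', hPR', hPN', hRN'⟩ := exists_complement_of_mul_eq_one hCR' hcard
  -- `fromCols R N * fromRows C' P'` maps `R'` to `R` and `N'` to `N`
  have hM {C₁ C₂ : Matrix l n K} {R₁ R₂ : Matrix n l K} {N₁ N₂ : Matrix n o K}
      {P₁ P₂ : Matrix o n K} (h₁ : R₁ * C₁ + N₁ * P₁ = 1) (hCR₂ : C₂ * R₂ = 1)
      (hCN₂ : C₂ * N₂ = 0) (hPR₂ : P₂ * R₂ = 0) (hPN₂ : P₂ * N₂ = 1) :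
      fromCols R₁ N₁ * fromRows C₂ P₂ * (fromCols R₂ N₂ * fromRows C₁ P₁) = 1 := by
    rw [Matrix.mul_assoc, ← Matrix.mul_assoc (fromRows C₂ P₂), fromRows_mul_fromCols, hCR₂,
      hCN₂, hPR₂, hPN₂, fromBlocks_one, Matrix.one_mul, fromCols_mul_fromRows, h₁]
  refine ⟨fromCols R N * fromRows C' P',
    ⟨⟨_, _, hM hRN hCR' hCN' hPR' hPN', hM hRN' hCR hCN hPR hPN⟩, rfl⟩, ?_⟩
  rw [← Matrix.mul_assoc, mul_fromCols, hCR, hCN, fromCols_mul_fromRows, Matrix.one_mul,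
    Matrix.zero_mul, add_zero]

theorem exists_rank_factorization [DecidableEq l] (A : Matrix m n K)
    (hl : Fintype.card l = A.rank) :
    ∃ (B : Matrix m l K) (C : Matrix l n K), A = B * C ∧
      (∃ L : Matrix l m K, L * B = 1) ∧ ∃ R : Matrix n l K, C * R = 1 := by
  obtain ⟨B, hB⟩ := exists_range_mulVecLin_eq (o := l) (LinearMap.range A.mulVecLin) hl.symm
  obtain ⟨L, hL⟩ := exists_left_inverse_of_rank_eq_card (A := B) (by rw [rank, hB, hl, rank])
  have hA : A = B * (L * A) := by
    refine Matrix.mulVec_injective (funext fun v => ?_)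
    obtain ⟨u, hu⟩ : A *ᵥ v ∈ LinearMap.range B.mulVecLin := hB ▸ ⟨v, rfl⟩
    simp only [← Matrix.mulVec_mulVec, ← hu]
    simp [Matrix.mulVec_mulVec, hL]
  refine ⟨B, L * A, hA, ⟨L, hL⟩, exists_right_inverse_of_rank_eq_card (le_antisymm
    (rank_le_card_height _) ?_)⟩
  calc Fintype.card l = (B * (L * A)).rank := by rw [← hA, hl]
    _ ≤ (L * A).rank := rank_mul_le_right _ _

theorem transpose_mul_self_eq_zero_of_mul_eq_one [DecidableEq l] {B : Matrix m l K}
    {C : Matrix l n K} {R : Matrix n l K} (hCR : C * R = 1) (hA : (B * C)ᵀ * (B * C) = 0) :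
    Bᵀ * B = 0 := by
  calc Bᵀ * B = (C * R)ᵀ * (Bᵀ * B) * (C * R) := by
        rw [hCR, transpose_one, Matrix.one_mul, Matrix.mul_one]
    _ = Rᵀ * ((B * C)ᵀ * (B * C)) * R := by simp only [transpose_mul, Matrix.mul_assoc]
    _ = 0 := by rw [hA, Matrix.mul_zero, Matrix.zero_mul]

theorem exists_isotropic_dual [Invertible (2 : K)] [DecidableEq l] {B : Matrix m l K}
    {L : Matrix l m K} (hB : Bᵀ * B = 0) (hL : L * B = 1) :
    ∃ D : Matrix m l K, Bᵀ * D = 1 ∧ Dᵀ * D = 0 := by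
  have hBL : Bᵀ * Lᵀ = 1 := by rw [← transpose_mul, hL, transpose_one]
  -- `Lᵀ` is dual to `B`; subtracting half of its Gram matrix along `B` makes it isotropic
  refine ⟨Lᵀ - (⅟2 : K) • (B * (L * Lᵀ)), ?_, ?_⟩
  · rw [Matrix.mul_sub, Matrix.mul_smul, ← Matrix.mul_assoc, hB, Matrix.zero_mul, smul_zero,
      sub_zero, hBL]
  · simp only [transpose_sub, transpose_smul, transpose_mul, transpose_transpose, Matrix.sub_mul,
      Matrix.mul_sub, Matrix.smul_mul, Matrix.mul_smul, Matrix.mul_assoc]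
    simp only [← Matrix.mul_assoc L B, ← Matrix.mul_assoc Bᵀ B, hL, hBL, hB, Matrix.one_mul,
      Matrix.mul_one, Matrix.zero_mul, Matrix.mul_zero, smul_zero, sub_zero]
    rw [sub_sub, ← add_smul, invOf_two_add_invOf_two, one_smul, sub_self]

theorem IsSymm.exists_transpose_mul_mul_eq_diagonal [Invertible (2 : K)] [DecidableEq m]
    {F : Matrix m m K} (hF : F.IsSymm) :
    ∃ (P : Matrix m m K) (d : m → K), IsUnit P ∧ Pᵀ * F * P = diagonal d := by
  obtain ⟨v, hv⟩ := LinearMap.BilinForm.exists_orthogonal_basis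
    (LinearMap.BilinForm.isSymm_iff.mp (Matrix.isSymm_toBilin'_iff_isSymm.mpr hF))
  let w := v.reindex (Fintype.equivOfCardEq (β := m) (by simp))
  let b := Pi.basisFun K m
  refine ⟨b.toMatrix w, fun i => F.toBilin' (w i) (w i),
    @isUnit_of_invertible _ _ _ (b.invertibleToMatrix w), ?_⟩
  conv_lhs => rw [← LinearMap.BilinForm.toMatrix'_toBilin' F,
    ← LinearMap.BilinForm.toMatrix_basisFun, LinearMap.BilinForm.toMatrix_mul_basis_toMatrix]
  ext i j
  rw [LinearMap.BilinForm.toMatrix_apply, diagonal_apply]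
  split_ifs with hij
  · rw [hij]
  · simp only [w, Module.Basis.reindex_apply]
    exact hv ((Equiv.symm _).injective.ne hij)

theorem IsSymm.exists_transpose_mul_mul_eq_one [IsAlgClosed K] [Invertible (2 : K)]
    [DecidableEq m] {F : Matrix m m K} (hF : F.IsSymm) (hu : IsUnit F) :
    ∃ Q : Matrix m m K, Qᵀ * F * Q = 1 := by
  obtain ⟨P, d, hP, hPF⟩ := hF.exists_transpose_mul_mul_eq_diagonal
  have hd : ∀ i, d i ≠ 0 := by
    have : IsUnit (diagonal d) := hPF ▸ (((isUnit_transpose P).mpr hP).mul hu).mul hP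
    exact fun i => (Pi.isUnit_iff.mp (isUnit_diagonal.mp this) i).ne_zero
  choose c hc using fun i => IsAlgClosed.exists_pow_nat_eq (d i)⁻¹ two_pos
  refine ⟨P * diagonal c, ?_⟩
  calc (P * diagonal c)ᵀ * F * (P * diagonal c) = diagonal c * (Pᵀ * F * P) * diagonal c := by
        simp only [transpose_mul, diagonal_transpose, Matrix.mul_assoc]
    _ = diagonal (fun i => c i ^ 2 * d i) := by
        rw [hPF, diagonal_mul_diagonal, diagonal_mul_diagonal]
        congr 1; ext i; ring
    _ = 1 := by simp [hc, hd]

theorem exists_orthonormal_complement [IsAlgClosed K] [Invertible (2 : K)] [DecidableEq m]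
    [DecidableEq n] [DecidableEq o] {M : Matrix m n K} (hM : IsUnit (Mᵀ * M))
    (hcard : Fintype.card n + Fintype.card o = Fintype.card m) :
    ∃ E : Matrix m o K, Mᵀ * E = 0 ∧ Eᵀ * E = 1 := by
  set H := Mᵀ * M
  have hdet : IsUnit H.det := (isUnit_iff_isUnit_det H).mp hM
  obtain ⟨N, P, hCN, -, hPN, hRN⟩ :=
    exists_complement_of_mul_eq_one (C := H⁻¹ * Mᵀ) (R := M)
    (by rw [Matrix.mul_assoc, nonsing_inv_mul H hdet]) hcard
  have hMN : Mᵀ * N = 0 := by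
    rw [← Matrix.one_mul Mᵀ, ← mul_nonsing_inv H hdet, Matrix.mul_assoc, Matrix.mul_assoc,
      ← Matrix.mul_assoc H⁻¹, hCN, Matrix.mul_zero]
  have hNM : Nᵀ * M = 0 := by
    rw [← transpose_transpose M, ← transpose_mul, hMN, transpose_zero]
  have hG : Nᵀ * N * (P * Pᵀ) = 1 := by
    calc Nᵀ * N * (P * Pᵀ) = Nᵀ * (M * (H⁻¹ * Mᵀ) + N * P) * Pᵀ := by
          rw [Matrix.mul_add, ← Matrix.mul_assoc Nᵀ M, hNM, Matrix.zero_mul, zero_add]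
          simp only [Matrix.mul_assoc]
      _ = (P * N)ᵀ := by rw [hRN, Matrix.mul_one, transpose_mul]
      _ = 1 := by rw [hPN, transpose_one]
  have hsymm : (Nᵀ * N).IsSymm := by rw [IsSymm, transpose_mul, transpose_transpose]
  obtain ⟨Q, hQ⟩ := hsymm.exists_transpose_mul_mul_eq_one
    ((isUnit_iff_isUnit_det _).mpr (isUnit_det_of_right_inverse hG))
  refine ⟨N * Q, by rw [← Matrix.mul_assoc, hMN, Matrix.zero_mul], ?_⟩
  rw [transpose_mul, ← hQ]
  simp only [Matrix.mul_assoc]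

theorem hyperbolicGram_mul_self [DecidableEq l] [DecidableEq o] :
    hyperbolicGram K l o * hyperbolicGram K l o = 1 := by
  simp [hyperbolicGram, fromBlocks_multiply, fromBlocks_one]

theorem exists_hyperbolic_extension [IsAlgClosed K] [Invertible (2 : K)] [DecidableEq l]
    [DecidableEq m] [DecidableEq o] {B : Matrix m l K} {L : Matrix l m K} (hB : Bᵀ * B = 0)
    (hL : L * B = 1) (hcard : Fintype.card l + Fintype.card l + Fintype.card o = Fintype.card m) :
    ∃ (D : Matrix m l K) (E : Matrix m o K),
      (fromCols (fromCols B D) E)ᵀ * fromCols (fromCols B D) E = hyperbolicGram K l o := by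
  obtain ⟨D, hBD, hD⟩ := exists_isotropic_dual hB hL
  have hDB : Dᵀ * B = 1 := by
    rw [← transpose_transpose B, ← transpose_mul, hBD, transpose_one]
  have hGram : (fromCols B D)ᵀ * fromCols B D = fromBlocks 0 1 1 0 := by
    rw [transpose_fromCols, fromRows_mul_fromCols, hB, hBD, hDB, hD]
  obtain ⟨E, hME, hE⟩ := exists_orthonormal_complement (o := o) (M := fromCols B D)
    (hGram ▸ (isUnit_iff_isUnit_det _).mpr (isUnit_det_of_right_inverse (B := fromBlocks 0 1 1 0)
      (by simp [fromBlocks_multiply, fromBlocks_one])))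
    (by simpa [Fintype.card_sum] using hcard)
  have hEM : Eᵀ * fromCols B D = 0 := by
    rw [← transpose_transpose (fromCols B D), ← transpose_mul, hME, transpose_zero]
  exact ⟨D, E, by rw [transpose_fromCols, fromRows_mul_fromCols, hGram, hME, hEM, hE,
    hyperbolicGram]⟩

theorem exists_orthogonal_mul_eq_of_isotropic [IsAlgClosed K] [Invertible (2 : K)]
    [DecidableEq l] [DecidableEq m] {B B' : Matrix m l K} {L L' : Matrix l m K}
    (hB : Bᵀ * B = 0) (hB' : B'ᵀ * B' = 0) (hL : L * B = 1) (hL' : L' * B' = 1)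
    (hcard : 2 * Fintype.card l ≤ Fintype.card m) :
    ∃ k : Matrix m m K, kᵀ * k = 1 ∧ k * B = B' := by
  let o := Fin (Fintype.card m - 2 * Fintype.card l)
  have hcard' : Fintype.card l + Fintype.card l + Fintype.card o = Fintype.card m := by
    simp only [o, Fintype.card_fin]; omega
  obtain ⟨D, E, hC⟩ := exists_hyperbolic_extension hB hL hcard'
  obtain ⟨D', E', hC'⟩ := exists_hyperbolic_extension hB' hL' hcard'
  set C := fromCols (fromCols B D) E
  set C' := fromCols (fromCols B' D') E'
  set G := hyperbolicGram K l o
  -- `G * Cᵀ = C⁻¹` because `G * G = 1`; the orthogonal map is `C' * C⁻¹`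
  have hCG : C * (G * Cᵀ) = 1 := by
    rw [mul_eq_one_comm_of_card_eq _ _ _ (by simpa [Fintype.card_sum] using hcard'.symm),
      Matrix.mul_assoc, hC, hyperbolicGram_mul_self]
  refine ⟨C' * G * Cᵀ, ?_, ?_⟩
  · calc (C' * G * Cᵀ)ᵀ * (C' * G * Cᵀ) = C * (G * (C'ᵀ * C') * G * Cᵀ) := by
          simp only [transpose_mul, transpose_transpose, G, transpose_hyperbolicGram,
            Matrix.mul_assoc]
      _ = 1 := by rw [hC', hyperbolicGram_mul_self, Matrix.one_mul, hCG]
  · have hkC : C' * G * Cᵀ * C = C' := by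
      rw [Matrix.mul_assoc, hC, Matrix.mul_assoc, hyperbolicGram_mul_self, Matrix.mul_one]
    simp only [C, C', mul_fromCols] at hkC
    exact (fromCols_inj (fromCols_inj hkC).1).1

end Matrix

theorem nullConeO_orbits_classified_by_rank_general (p n : ℕ)
    (h : 2 * n < p) (A A' : Matrix (Fin p) (Fin n) ℂ)
    (hA : Aᵀ * A = 0) (hA' : A'ᵀ * A' = 0) (hrank : A.rank = A'.rank) :
    ∃ (k : Matrix (Fin p) (Fin p) ℂ) (g : Matrix (Fin n) (Fin n) ℂ),
      kᵀ * k = 1 ∧ IsUnit g ∧ A' = k * A * gᵀ := by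
  obtain ⟨B, C, hBC, ⟨L, hL⟩, R, hR⟩ :=
    exists_rank_factorization A (l := Fin A.rank) (by simp)
  obtain ⟨B', C', hBC', ⟨L', hL'⟩, R', hR'⟩ :=
    exists_rank_factorization A' (l := Fin A.rank) (by simp [hrank])
  have hcard : 2 * Fintype.card (Fin A.rank) ≤ Fintype.card (Fin p) := by
    have := A.rank_le_width
    simp only [Fintype.card_fin]
    omega
  obtain ⟨k, hk, hkB⟩ := exists_orthogonal_mul_eq_of_isotropic
    (transpose_mul_self_eq_zero_of_mul_eq_one hR (hBC ▸ hA))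
    (transpose_mul_self_eq_zero_of_mul_eq_one hR' (hBC' ▸ hA')) hL hL' hcard
  obtain ⟨M, hM, hCM⟩ := exists_isUnit_mul_eq_of_mul_eq_one hR hR'
  refine ⟨k, Mᵀ, hk, (isUnit_transpose M).mpr hM, ?_⟩
  rw [transpose_transpose, hBC', hCM, ← hkB, Matrix.mul_assoc k, ← Matrix.mul_assoc B, ← hBC,
    Matrix.mul_assoc]

/-- In the stable range `2n < p`, two matrices in the null cone
`{A ∈ M_{p,n}(ℂ) : AᵀA = 0}` of the same rank lie in the same
`O(p,ℂ) × GL_n(ℂ)`-orbit under the action `(k,g)·A = kAgᵀ`. -/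
theorem nullConeO_orbits_classified_by_rank (p n : ℕ) (hp : 0 < p) (hn : 0 < n)
    (h : 2 * n < p) (A A' : Matrix (Fin p) (Fin n) ℂ)
    (hA : Aᵀ * A = 0) (hA' : A'ᵀ * A' = 0) (hrank : A.rank = A'.rank) :
    ∃ (k : Matrix (Fin p) (Fin p) ℂ) (g : Matrix (Fin n) (Fin n) ℂ),
      kᵀ * k = 1 ∧ IsUnit g ∧ A' = k * A * gᵀ :=
  nullConeO_orbits_classified_by_rank_general p n h A A' hA hA' hrank
end

section
/- Let p, n be positive integers with 2n < p, and let A, A' ∈ M_{p,n}(ℂ) satisfy AᵀA = 0, A'ᵀA' = 0 and rank A = rank A' = n. Then there exists a complex orthogonal matrix k ∈ O(p,ℂ) (i.e. kᵀk = 1_p) such that A' = kA. (That is, the full-rank locus of the null cone is a single orbit already under left multiplication by O(p,ℂ).) -/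
/-!
Complete the isotropic full-rank `A` to a hyperbolic pair: a `B` with `AᵀB = 1` and `BᵀB = 0`.
With `i² = -1`, the `2n` columns of `A + B/2` and `i (A - B/2)` are then orthonormal for the
bilinear form `xᵀy`. Over an algebraically closed field of characteristic `≠ 2` any two
orthonormal frames of the same size are related by an orthogonal matrix (Witt): the orthogonal
complement of a frame is nondegenerate, so it contains an anisotropic vector, which a square root
normalizes, and the frame grows one vector at a time until it is a basis. An orthogonal `k`
carrying the frame of `(A, B)` to that of `(A', B')` carries `A`, half the sum of `A + B/2` and
`A - B/2`, to `A'`.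
-/

open Matrix

namespace Matrix

variable {𝕜 m ι : Type*} [Field 𝕜] [Fintype m]

lemma exists_mem_dotProduct_self_ne_zero [NeZero (2 : 𝕜)] {K : Submodule 𝕜 (m → 𝕜)}
    (h : ∃ v ∈ K, ∃ w ∈ K, v ⬝ᵥ w ≠ 0) : ∃ v ∈ K, v ⬝ᵥ v ≠ 0 := by
  have : Invertible (2 : 𝕜) := invertibleOfNonzero two_ne_zero
  obtain ⟨v, hv, w, hw, hvw⟩ := h
  set B := LinearMap.BilinForm.restrict (dotProductBilin 𝕜 𝕜) K
  have hB : B ≠ 0 := fun hB => hvw (by simpa [B] using LinearMap.congr_fun₂ hB ⟨v, hv⟩ ⟨w, hw⟩)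
  have hBsymm : B.IsSymm := LinearMap.BilinForm.IsSymm.restrict ⟨dotProduct_comm⟩ K
  obtain ⟨⟨x, hx⟩, hxx⟩ := LinearMap.BilinForm.exists_bilinForm_self_ne_zero hB
    (LinearMap.BilinForm.isSymm_iff.mp hBsymm)
  exact ⟨x, hx, by simpa [B] using hxx⟩

variable [DecidableEq ι]

lemma exists_mulVec_eq_zero_dotProduct_ne_zero [Fintype ι] {M : Matrix m ι 𝕜} (hM : Mᵀ * M = 1)
    {v : m → 𝕜} (hv : Mᵀ *ᵥ v = 0) (hv₀ : v ≠ 0) : ∃ w, Mᵀ *ᵥ w = 0 ∧ v ⬝ᵥ w ≠ 0 := by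
  by_contra! hperp
  refine hv₀ (dotProduct_eq_zero v fun x => ?_)
  have hproj : Mᵀ *ᵥ (x - M *ᵥ (Mᵀ *ᵥ x)) = 0 := by
    rw [mulVec_sub, mulVec_mulVec, hM, one_mulVec, sub_self]
  have hrange : v ⬝ᵥ M *ᵥ (Mᵀ *ᵥ x) = 0 := by
    rw [dotProduct_mulVec, ← mulVec_transpose, hv, zero_dotProduct]
  calc v ⬝ᵥ x = v ⬝ᵥ M *ᵥ (Mᵀ *ᵥ x) + v ⬝ᵥ (x - M *ᵥ (Mᵀ *ᵥ x)) := by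
        rw [dotProduct_sub]; ring
    _ = 0 := by rw [hrange, hperp _ hproj, add_zero]

lemma exists_mulVec_eq_zero_dotProduct_self_eq_one [IsAlgClosed 𝕜] [NeZero (2 : 𝕜)] [Fintype ι]
    (hcard : Fintype.card ι < Fintype.card m) {M : Matrix m ι 𝕜} (hM : Mᵀ * M = 1) :
    ∃ v, Mᵀ *ᵥ v = 0 ∧ v ⬝ᵥ v = 1 := by
  set K := LinearMap.ker Mᵀ.mulVecLin
  have hK : K ≠ ⊥ := LinearMap.ker_ne_bot_of_finrank_lt (by simpa using hcard)
  obtain ⟨v, hv, hv₀⟩ := Submodule.exists_mem_ne_zero_of_ne_bot hK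
  obtain ⟨w, hw, hvw⟩ := exists_mulVec_eq_zero_dotProduct_ne_zero hM hv hv₀
  obtain ⟨u, hu, huu⟩ := exists_mem_dotProduct_self_ne_zero ⟨v, hv, w, hw, hvw⟩
  obtain ⟨c, hc⟩ := IsAlgClosed.exists_pow_nat_eq (u ⬝ᵥ u) two_pos
  have hc₀ : c ≠ 0 := by rintro rfl; exact huu (by simp [← hc])
  refine ⟨c⁻¹ • u, by rw [mulVec_smul, show Mᵀ *ᵥ u = 0 from hu, smul_zero], ?_⟩
  rw [smul_dotProduct, dotProduct_smul, smul_smul, ← hc, smul_eq_mul]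
  field_simp

lemma transpose_mul_self_fromCols_replicateCol {M : Matrix m ι 𝕜} (hM : Mᵀ * M = 1)
    {v : m → 𝕜} (hv : Mᵀ *ᵥ v = 0) (hvv : v ⬝ᵥ v = 1) :
    (fromCols M (replicateCol Unit v))ᵀ * fromCols M (replicateCol Unit v) = 1 := by
  have hMv : Mᵀ * replicateCol Unit v = 0 := by rw [← replicateCol_mulVec, hv]; rfl
  have hvM : (replicateCol Unit v)ᵀ * M = 0 := by
    simpa [transpose_mul] using congrArg transpose hMv
  have hvv' : (replicateCol Unit v)ᵀ * replicateCol Unit v = 1 := by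
    ext; simpa [mul_apply, dotProduct] using hvv
  rw [transpose_fromCols, fromRows_mul_fromCols, hM, hMv, hvM, hvv', fromBlocks_one]

section Orthogonal

variable [DecidableEq m]

lemma exists_orthogonal_mul_eq_of_card_eq [Fintype ι] (hcard : Fintype.card ι = Fintype.card m)
    {M M' : Matrix m ι 𝕜} (hM : Mᵀ * M = 1) (hM' : M'ᵀ * M' = 1) :
    ∃ k : Matrix m m 𝕜, kᵀ * k = 1 ∧ k * M = M' := by
  have hMMt : M * Mᵀ = 1 := (mul_eq_one_comm_of_equiv (Fintype.equivOfCardEq hcard)).mp hM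
  refine ⟨M' * Mᵀ, ?_, by rw [Matrix.mul_assoc, hM, Matrix.mul_one]⟩
  calc (M' * Mᵀ)ᵀ * (M' * Mᵀ) = M * (M'ᵀ * M') * Mᵀ := by
        simp only [transpose_mul, transpose_transpose, Matrix.mul_assoc]
    _ = 1 := by rw [hM', Matrix.mul_one, hMMt]

theorem exists_orthogonal_mul_eq [IsAlgClosed 𝕜] [NeZero (2 : 𝕜)] [Fintype ι]
    (hcard : Fintype.card ι ≤ Fintype.card m) {M M' : Matrix m ι 𝕜} (hM : Mᵀ * M = 1)
    (hM' : M'ᵀ * M' = 1) : ∃ k : Matrix m m 𝕜, kᵀ * k = 1 ∧ k * M = M' := by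
  obtain ⟨d, hd⟩ := Nat.exists_eq_add_of_le hcard
  induction d generalizing ι with
  | zero => exact exists_orthogonal_mul_eq_of_card_eq hd.symm hM hM'
  | succ d ih =>
    obtain ⟨v, hv, hvv⟩ := exists_mulVec_eq_zero_dotProduct_self_eq_one (by omega) hM
    obtain ⟨v', hv', hvv'⟩ := exists_mulVec_eq_zero_dotProduct_self_eq_one (by omega) hM'
    obtain ⟨k, hk, hkN⟩ := ih (by simp; omega)
      (transpose_mul_self_fromCols_replicateCol hM hv hvv)
      (transpose_mul_self_fromCols_replicateCol hM' hv' hvv') (by simp; omega)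
    rw [mul_fromCols, fromCols_ext_iff] at hkN
    exact ⟨k, hk, hkN.1⟩

end Orthogonal

section Hyperbolic

variable {n l : Type*}

lemma exists_mul_eq_one_of_rank_eq [Fintype n] [DecidableEq n] {A : Matrix n m 𝕜}
    (h : A.rank = Fintype.card n) : ∃ C : Matrix m n 𝕜, A * C = 1 := by
  refine mulVec_surjective_iff_exists_right_inverse.mp
    (LinearMap.range_eq_top (f := A.mulVecLin).mp ?_)
  exact Submodule.eq_top_of_finrank_eq (h.trans (Module.finrank_fintype_fun_eq_card 𝕜).symm)

lemma exists_isotropic_dual_s13 [Fintype n] [DecidableEq n] [NeZero (2 : 𝕜)] {A : Matrix m n 𝕜}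
    (hA : Aᵀ * A = 0) (hrank : A.rank = Fintype.card n) :
    ∃ B : Matrix m n 𝕜, Aᵀ * B = 1 ∧ Bᵀ * B = 0 := by
  obtain ⟨C, hAC⟩ := exists_mul_eq_one_of_rank_eq (A := Aᵀ) (by rwa [rank_transpose])
  have hCA : Cᵀ * A = 1 := by simpa [transpose_mul] using congrArg transpose hAC
  have hgram : ∀ X, (C - A * X)ᵀ * (C - A * X) = Cᵀ * C - X - Xᵀ := fun X => by
    simp only [transpose_sub, transpose_mul, Matrix.sub_mul, Matrix.mul_sub, ← Matrix.mul_assoc,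
      hCA, Matrix.one_mul]
    rw [Matrix.mul_assoc Xᵀ Aᵀ A, hA, Matrix.mul_assoc Xᵀ Aᵀ C, hAC]
    simp only [Matrix.mul_zero, Matrix.zero_mul, Matrix.mul_one, sub_zero]
    abel
  refine ⟨C - A * ((2 : 𝕜)⁻¹ • (Cᵀ * C)), ?_, ?_⟩
  · rw [Matrix.mul_sub, hAC, ← Matrix.mul_assoc, hA, Matrix.zero_mul, sub_zero]
  · rw [hgram, transpose_smul, transpose_mul, transpose_transpose, sub_sub, ← add_smul, ← two_mul,
      mul_inv_cancel₀ two_ne_zero, one_smul, sub_self]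

def hyperbolicFrame (i : 𝕜) (A B : Matrix m n 𝕜) : Matrix m (n ⊕ n) 𝕜 :=
  fromCols (A + (2 : 𝕜)⁻¹ • B) (i • (A - (2 : 𝕜)⁻¹ • B))

variable {i : 𝕜} {A B : Matrix m n 𝕜}

lemma transpose_mul_self_hyperbolicFrame [Fintype n] [DecidableEq n] [NeZero (2 : 𝕜)]
    (hi : i * i = -1) (hA : Aᵀ * A = 0) (hB : Bᵀ * B = 0) (hAB : Aᵀ * B = 1) :
    (hyperbolicFrame i A B)ᵀ * hyperbolicFrame i A B = 1 := by
  have hBA : Bᵀ * A = 1 := by simpa [transpose_mul] using congrArg transpose hAB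
  have h2 : (2 : 𝕜)⁻¹ + 2⁻¹ = 1 := by rw [← two_mul, mul_inv_cancel₀ two_ne_zero]
  rw [hyperbolicFrame, transpose_fromCols, fromRows_mul_fromCols, ← fromBlocks_one]
  simp only [transpose_add, transpose_sub, transpose_smul, Matrix.add_mul, Matrix.sub_mul,
    Matrix.mul_add, Matrix.mul_sub, Matrix.smul_mul, Matrix.mul_smul, hA, hB, hAB, hBA, smul_smul]
  congr 1
  · linear_combination (norm := module) h2 • (1 : Matrix n n 𝕜)
  · module
  · module
  · linear_combination (norm := module) (-(i * i) * h2 - hi) • (1 : Matrix n n 𝕜)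

lemma mul_eq_of_mul_hyperbolicFrame_eq [NeZero (2 : 𝕜)] (hi : i * i = -1) {A' B' : Matrix l n 𝕜}
    {k : Matrix l m 𝕜} (h : k * hyperbolicFrame i A B = hyperbolicFrame i A' B') : k * A = A' := by
  have hi₀ : i ≠ 0 := by rintro rfl; simp at hi
  rw [hyperbolicFrame, hyperbolicFrame, mul_fromCols, fromCols_ext_iff, Matrix.mul_smul] at h
  obtain ⟨hplus, hminus⟩ := h
  replace hminus := smul_right_injective _ hi₀ hminus
  have h2 : (2 : 𝕜)⁻¹ + 2⁻¹ = 1 := by rw [← two_mul, mul_inv_cancel₀ two_ne_zero]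
  calc k * A = (2 : 𝕜)⁻¹ • (k * (A + (2 : 𝕜)⁻¹ • B) + k * (A - (2 : 𝕜)⁻¹ • B)) := by
        simp only [Matrix.mul_add, Matrix.mul_sub, Matrix.mul_smul]
        linear_combination (norm := module) -h2 • (k * A)
    _ = A' := by
        rw [hplus, hminus]
        linear_combination (norm := module) h2 • A'

end Hyperbolic

end Matrix

theorem nullConeO_full_rank_single_orbit_general (p n : ℕ)
    (h : 2 * n < p) (A A' : Matrix (Fin p) (Fin n) ℂ)
    (hA : Aᵀ * A = 0) (hA' : A'ᵀ * A' = 0)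
    (hrA : A.rank = n) (hrA' : A'.rank = n) :
    ∃ k : Matrix (Fin p) (Fin p) ℂ, kᵀ * k = 1 ∧ A' = k * A := by
  obtain ⟨B, hAB, hB⟩ := exists_isotropic_dual_s13 hA (by simpa using hrA)
  obtain ⟨B', hAB', hB'⟩ := exists_isotropic_dual_s13 hA' (by simpa using hrA')
  obtain ⟨k, hk, hkF⟩ := exists_orthogonal_mul_eq (by simp; omega)
    (transpose_mul_self_hyperbolicFrame Complex.I_mul_I hA hB hAB)
    (transpose_mul_self_hyperbolicFrame Complex.I_mul_I hA' hB' hAB')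
  exact ⟨k, hk, (mul_eq_of_mul_hyperbolicFrame_eq Complex.I_mul_I hkF).symm⟩

/-- In the stable range `2n < p`, the full-rank locus of the null cone
`{A ∈ M_{p,n}(ℂ) : AᵀA = 0}` is a single orbit under left multiplication by
the complex orthogonal group `O(p,ℂ)`. -/
theorem nullConeO_full_rank_single_orbit (p n : ℕ) (hp : 0 < p) (hn : 0 < n)
    (h : 2 * n < p) (A A' : Matrix (Fin p) (Fin n) ℂ)
    (hA : Aᵀ * A = 0) (hA' : A'ᵀ * A' = 0)
    (hrA : A.rank = n) (hrA' : A'.rank = n) :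
    ∃ k : Matrix (Fin p) (Fin p) ℂ, kᵀ * k = 1 ∧ A' = k * A :=
  nullConeO_full_rank_single_orbit_general p n h A A' hA hA' hrA hrA'
end

section
/- Let p, m, n be positive integers with m + n ≤ p, and let (A,B), (A',B') ∈ M_{p,m}(ℂ) × M_{p,n}(ℂ) satisfy AᵀB = 0, A'ᵀB' = 0, rank A = rank A' and rank B = rank B'. Then there exist g ∈ GL_p(ℂ), h₁ ∈ GL_m(ℂ) and h₂ ∈ GL_n(ℂ) such that A' = g A h₁ᵀ and B' = (gᵀ)^{−1} B h₂^{−1}. (That is, the GL_p(ℂ) × (GL_m(ℂ) × GL_n(ℂ))-orbits in the null cone {(A,B) : AᵀB = 0} under the action (g,h₁,h₂)·(A,B) = (gAh₁ᵀ, (gᵀ)^{−1}Bh₂^{−1}) are exactly classified by the pair (rank A, rank B).) -/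
/-!
Both pairs are moved to a normal form that depends only on `a = rank A` and `b = rank B`.
Right multiplication writes `A = U (0 | I_a) R` and `B = W (0 | I_b) R'` with `U`, `W` of
independent columns, and `AᵀB = 0` becomes `UᵀW = 0`, i.e. the columns of `W` lie in
`ker Uᵀ`, a space of dimension `p - a`. Extend them to a basis of `ker Uᵀ` and append `a`
vectors on which `Uᵀ` takes the values `e₁, …, e_a`: the matrix `g` with these rows is
invertible, `gU = (0; I_a)` and `gᵀ (I_b; 0) = W`, which normalises `A` and `B` at once.
-/

open Matrix Module Submodule

namespace NullCone

section LinearAlgebra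

variable {K V : Type*} [Field K] [AddCommGroup V] [Module K V] [FiniteDimensional K V]

theorem exists_basis_extending {a q : ℕ} (hq : finrank K V = q) {u : Fin a → V}
    (hu : LinearIndependent K u) :
    ∃ β : Basis (Fin q) K V, ∀ (k : Fin q) (hk : (k : ℕ) < a), β k = u ⟨k, hk⟩ := by
  let β₀ := Basis.sumExtend hu
  have := Module.Finite.finite_basis β₀
  have : Finite (Basis.sumExtendIndex hu) :=
    Finite.of_injective (Sum.inr (α := Fin a)) Sum.inr_injective
  have hcard : a + Nat.card (Basis.sumExtendIndex hu) = q := by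
    rw [← hq, finrank_eq_nat_card_basis β₀, Nat.card_sum, Nat.card_fin]
  let e := (Equiv.sumCongr (Equiv.refl _) (Finite.equivFin _)).trans
    (finSumFinEquiv.trans (finCongr hcard))
  refine ⟨β₀.reindex e, fun k hk => ?_⟩
  have he : e.symm k = Sum.inl ⟨k, hk⟩ := by
    rw [Equiv.symm_apply_eq]; exact Fin.ext rfl
  rw [Basis.reindex_apply, he]
  simp [β₀, Basis.sumExtend]; rfl

theorem exists_basis_ker_append_preimage {W : Type*} [AddCommGroup W] [Module K W] {p c r : ℕ}
    (hp : finrank K V = p) (f : V →ₗ[K] W) (β₀ : Basis (Fin c) K (LinearMap.ker f))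
    (γ : Basis (Fin r) K (LinearMap.range f)) :
    ∃ β : Basis (Fin p) K V, (∀ (k : Fin p) (hk : (k : ℕ) < c), β k = β₀ ⟨k, hk⟩) ∧
      ∀ (k : Fin p) (j : Fin r), (k : ℕ) = c + j → f (β k) = γ j := by
  choose v hv using fun j => (γ j).2
  have hfv : LinearIndependent K (f ∘ v) := by
    rw [show f ∘ v = (LinearMap.range f).subtype ∘ γ from funext hv]
    exact γ.linearIndependent.map' _ (ker_subtype _)
  have hind : LinearIndependent K (Sum.elim (fun k => (β₀ k : V)) v) :=
    (β₀.linearIndependent.map' _ (ker_subtype _)).sum_type (hfv.of_comp f)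
      ((Submodule.range_ker_disjoint hfv).symm.mono_left
        (span_le.mpr (Set.range_subset_iff.mpr fun k => (β₀ k).2)))
  have hcard : c + r = p := by
    rw [← hp, ← f.finrank_range_add_finrank_ker, finrank_eq_card_basis β₀,
      finrank_eq_card_basis γ, Fintype.card_fin, Fintype.card_fin, add_comm]
  let β' := basisOfLinearIndependentOfCardEqFinrank' _ hind (by simp [hp, hcard])
  let e := finSumFinEquiv.trans (finCongr hcard)
  refine ⟨β'.reindex e, fun k hk => ?_, fun k j hkj => ?_⟩
  · have he : e.symm k = Sum.inl ⟨k, hk⟩ := by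
      rw [Equiv.symm_apply_eq]; ext; simp [e]
    simp [β', he]
  · have he : e.symm k = Sum.inr j := by
      rw [Equiv.symm_apply_eq]; ext; simp [e, hkj]
    simp [β', he, hv]

end LinearAlgebra

section ShiftedIdentity

def shiftedIdentity (R : Type*) [Zero R] [One R] (p a s : ℕ) : Matrix (Fin p) (Fin a) R :=
  of fun i j => if (i : ℕ) = s + j then 1 else 0

variable {R ι : Type*} [Semiring R] {p a s : ℕ}

theorem mul_shiftedIdentity_apply_of_eq (M : Matrix ι (Fin p) R) (i : ι) {j : Fin a}
    {k : Fin p} (hk : (k : ℕ) = s + j) : (M * shiftedIdentity R p a s) i j = M i k := by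
  rw [mul_apply, Finset.sum_eq_single k]
  · simp [shiftedIdentity, hk]
  · intro l _ hl
    simp [shiftedIdentity, ← hk, Fin.val_ne_of_ne hl]
  · simp

theorem mul_transpose_shiftedIdentity_apply_of_lt (U : Matrix ι (Fin a) R) (i : ι) {k : Fin p}
    (hk : (k : ℕ) < s) : (U * (shiftedIdentity R p a s)ᵀ) i k = 0 := by
  rw [mul_apply]
  refine Finset.sum_eq_zero fun j _ => ?_
  simp [shiftedIdentity]
  omega

theorem mul_transpose_shiftedIdentity_apply_of_eq (U : Matrix ι (Fin a) R) (i : ι) {j : Fin a}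
    {k : Fin p} (hk : (k : ℕ) = s + j) : (U * (shiftedIdentity R p a s)ᵀ) i k = U i j := by
  rw [mul_apply, Finset.sum_eq_single j]
  · simp [shiftedIdentity, hk]
  · intro l _ hl
    simp [shiftedIdentity, hk, Fin.val_ne_of_ne hl.symm]
  · simp

theorem transpose_shiftedIdentity_mul_self (h : s + a ≤ p) :
    (shiftedIdentity R p a s)ᵀ * shiftedIdentity R p a s = 1 := by
  ext i j
  rw [mul_shiftedIdentity_apply_of_eq _ _ (k := ⟨s + j, by omega⟩) rfl]
  simp [shiftedIdentity, one_apply, Fin.ext_iff, eq_comm]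

theorem eq_mul_shiftedIdentity_of_mul_transpose {q : ℕ} {M : Matrix ι (Fin q) R}
    {U : Matrix ι (Fin a) R} (h : s + a ≤ q) (hMU : M = U * (shiftedIdentity R q a s)ᵀ) :
    U = M * shiftedIdentity R q a s := by
  rw [hMU, Matrix.mul_assoc, transpose_shiftedIdentity_mul_self h, Matrix.mul_one]

end ShiftedIdentity

section NormalForm

variable {K : Type*} [Field K]

theorem range_mulVecLin_transpose_eq_top {p a : ℕ} {U : Matrix (Fin p) (Fin a) K}
    (hU : LinearIndependent K U.col) : LinearMap.range Uᵀ.mulVecLin = ⊤ := by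
  apply Submodule.eq_top_of_finrank_eq
  rw [finrank_fin_fun]
  exact LinearIndependent.rank_matrix (M := Uᵀ) hU |>.trans (Fintype.card_fin a)

theorem exists_isUnit_mul_eq_shiftedIdentity {p a b : ℕ} {U : Matrix (Fin p) (Fin a) K}
    {W : Matrix (Fin p) (Fin b) K} (hU : LinearIndependent K U.col)
    (hW : LinearIndependent K W.col) (hUW : Uᵀ * W = 0) :
    ∃ g : Matrix (Fin p) (Fin p) K, IsUnit g ∧ g * U = shiftedIdentity K p a (p - a) ∧
      gᵀ * shiftedIdentity K p b 0 = W := by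
  set f := Uᵀ.mulVecLin
  have hf : LinearMap.range f = ⊤ := range_mulVecLin_transpose_eq_top hU
  have hc : finrank K (LinearMap.ker f) = p - a := by
    have := f.finrank_range_add_finrank_ker
    rw [hf, finrank_top, finrank_fin_fun, finrank_fin_fun] at this
    exact Nat.eq_sub_of_add_eq' this
  have hWker : ∀ j, W.col j ∈ LinearMap.ker f := fun j => by
    rw [LinearMap.mem_ker]
    ext i
    simpa [f, mul_apply, vecMul, dotProduct, mul_comm] using congr_fun₂ hUW i j
  have hWind : LinearIndependent K fun j => (⟨W.col j, hWker j⟩ : LinearMap.ker f) :=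
    LinearIndependent.of_comp (LinearMap.ker f).subtype hW
  have hbc : b ≤ p - a := by simpa [hc] using hWind.fintype_card_le_finrank
  obtain ⟨β₀, hβ₀⟩ := exists_basis_extending hc hWind
  obtain ⟨β, hβker, hβrange⟩ := exists_basis_ker_append_preimage (finrank_fin_fun K) f β₀
    ((Pi.basisFun K (Fin a)).map (LinearEquiv.ofTop _ hf).symm)
  refine ⟨of β, linearIndependent_rows_iff_isUnit.mp β.linearIndependent, ?_, ?_⟩
  · ext k i
    have hgU : (of β * U) k i = f (β k) i := by
      simp [f, mul_apply, vecMul, dotProduct, mul_comm]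
    rw [hgU, shiftedIdentity, of_apply]
    by_cases hk : (k : ℕ) < p - a
    · rw [hβker k hk, LinearMap.mem_ker.mp (Subtype.prop _), Pi.zero_apply, if_neg (by omega)]
    · have hj : (k : ℕ) - (p - a) < a := by omega
      have hkj : (k : ℕ) = p - a + (⟨_, hj⟩ : Fin a) := by simp; omega
      rw [hβrange k _ hkj]
      simp only [Basis.map_apply, Pi.basisFun_apply, LinearEquiv.coe_ofTop_symm_apply,
        Pi.single_apply, Fin.ext_iff]
      exact if_congr (by omega) rfl rfl
  · ext i j
    have hj : (j : ℕ) < p - a := lt_of_lt_of_le j.2 hbc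
    rw [mul_shiftedIdentity_apply_of_eq (p := p) (j := j) (k := ⟨j, by omega⟩) _ _
      (zero_add _).symm, transpose_apply, of_apply, hβker _ hj, hβ₀ _ j.2]
    rfl

theorem exists_isUnit_mul_transpose_eq_mul_shiftedIdentity {p q : ℕ}
    (M : Matrix (Fin p) (Fin q) K) :
    ∃ (R : Matrix (Fin q) (Fin q) K) (U : Matrix (Fin p) (Fin M.rank) K),
      IsUnit R ∧ LinearIndependent K U.col ∧
        M * Rᵀ = U * (shiftedIdentity K q M.rank (q - M.rank))ᵀ := by
  set f := M.mulVecLin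
  have hc : finrank K (LinearMap.ker f) = q - M.rank := by
    have := f.finrank_range_add_finrank_ker
    rw [finrank_fin_fun] at this
    exact Nat.eq_sub_of_add_eq' this
  let γ : Basis (Fin M.rank) K (LinearMap.range f) := finBasisOfFinrankEq K _ rfl
  obtain ⟨β, hβker, hβrange⟩ := exists_basis_ker_append_preimage (finrank_fin_fun K) f
    (finBasisOfFinrankEq K _ hc) γ
  have hU : LinearIndependent K ((LinearMap.range f).subtype ∘ γ) :=
    γ.linearIndependent.map' _ (ker_subtype _)
  refine ⟨of β, (of ((LinearMap.range f).subtype ∘ γ))ᵀ,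
    linearIndependent_rows_iff_isUnit.mp β.linearIndependent, by rwa [col_transpose], ?_⟩
  ext i k
  change f (β k) i = _
  by_cases hk : (k : ℕ) < q - M.rank
  · rw [mul_transpose_shiftedIdentity_apply_of_lt _ _ hk, hβker k hk,
      LinearMap.mem_ker.mp (Subtype.prop _), Pi.zero_apply]
  · have hj : (k : ℕ) - (q - M.rank) < M.rank := by have := M.rank_le_width; omega
    have hkj : (k : ℕ) = q - M.rank + (⟨_, hj⟩ : Fin M.rank) := by simp; omega
    rw [mul_transpose_shiftedIdentity_apply_of_eq _ _ hkj, hβrange k _ hkj]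
    rfl

end NormalForm

section Action

variable (R p m n : Type*) [CommRing R] [Fintype p] [DecidableEq p] [Fintype m] [DecidableEq m]
  [Fintype n] [DecidableEq n]

noncomputable abbrev action :
    MulAction (GL p R × GL m R × GL n R) (Matrix p m R × Matrix p n R) where
  smul γ x := ((γ.1 : Matrix p p R) * x.1 * (γ.2.1 : Matrix m m R)ᵀ,
    ((γ.1 : Matrix p p R)ᵀ)⁻¹ * x.2 * (γ.2.2 : Matrix n n R)⁻¹)
  one_smul x := by
    ext : 1 <;> dsimp only [HSMul.hSMul] <;> simp
  mul_smul γ δ x := by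
    ext : 1 <;> dsimp only [HSMul.hSMul] <;> simp [Matrix.mul_inv_rev, Matrix.mul_assoc]

attribute [local instance] action

variable {R p m n} in
theorem action_smul (γ : GL p R × GL m R × GL n R) (x : Matrix p m R × Matrix p n R) :
    γ • x = ((γ.1 : Matrix p p R) * x.1 * (γ.2.1 : Matrix m m R)ᵀ,
      ((γ.1 : Matrix p p R)ᵀ)⁻¹ * x.2 * (γ.2.2 : Matrix n n R)⁻¹) :=
  rfl

end Action

attribute [local instance] action

variable {K : Type*} [Field K]

variable (K) in
/-- An `a × a` identity block in the bottom right corner of the first matrix and a `b × b` one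
in the top right corner of the second. -/
def normalForm (p m n a b : ℕ) :
    Matrix (Fin p) (Fin m) K × Matrix (Fin p) (Fin n) K :=
  (shiftedIdentity K p a (p - a) * (shiftedIdentity K m a (m - a))ᵀ,
    shiftedIdentity K p b 0 * (shiftedIdentity K n b (n - b))ᵀ)

theorem normalForm_mem_orbit {p m n : ℕ} {A : Matrix (Fin p) (Fin m) K}
    {B : Matrix (Fin p) (Fin n) K} (hAB : Aᵀ * B = 0) :
    normalForm K p m n A.rank B.rank ∈
      MulAction.orbit (GL (Fin p) K × GL (Fin m) K × GL (Fin n) K) (A, B) := by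
  obtain ⟨R, U, hR, hU, hAR⟩ := exists_isUnit_mul_transpose_eq_mul_shiftedIdentity A
  obtain ⟨R', W, hR', hW, hBR'⟩ := exists_isUnit_mul_transpose_eq_mul_shiftedIdentity B
  have hUW : Uᵀ * W = 0 := by
    rw [eq_mul_shiftedIdentity_of_mul_transpose (Nat.sub_add_cancel A.rank_le_width).le hAR,
      eq_mul_shiftedIdentity_of_mul_transpose (Nat.sub_add_cancel B.rank_le_width).le hBR']
    simp only [transpose_mul, Matrix.mul_assoc]
    rw [← Matrix.mul_assoc Aᵀ, hAB]
    simp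
  obtain ⟨g, hg, hgU, hgW⟩ := exists_isUnit_mul_eq_shiftedIdentity hU hW hUW
  have hR't : IsUnit R'ᵀ := (isUnit_transpose R').mpr hR'
  refine MulAction.mem_orbit_iff.mpr ⟨(hg.unit, hR.unit, hR't.unit⁻¹), ?_⟩
  rw [action_smul, Matrix.inv_eq_left_inv hR't.unit.mul_inv]
  simp only [IsUnit.unit_spec, normalForm, Prod.mk.injEq]
  constructor
  · rw [Matrix.mul_assoc, hAR, ← Matrix.mul_assoc, hgU]
  · have hgt : IsUnit gᵀ.det := (isUnit_iff_isUnit_det _).mp ((isUnit_transpose g).mpr hg)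
    rw [Matrix.mul_assoc, hBR', ← hgW, ← Matrix.mul_assoc,
      Matrix.nonsing_inv_mul_cancel_left _ _ hgt]

end NullCone

theorem nullConeU_orbits_classified_by_rank_general (p m n : ℕ)
    (A A' : Matrix (Fin p) (Fin m) ℂ) (B B' : Matrix (Fin p) (Fin n) ℂ)
    (hAB : Aᵀ * B = 0) (hAB' : A'ᵀ * B' = 0)
    (hrA : A.rank = A'.rank) (hrB : B.rank = B'.rank) :
    ∃ (g : Matrix (Fin p) (Fin p) ℂ) (h₁ : Matrix (Fin m) (Fin m) ℂ)
      (h₂ : Matrix (Fin n) (Fin n) ℂ),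
      IsUnit g ∧ IsUnit h₁ ∧ IsUnit h₂ ∧
        A' = g * A * h₁ᵀ ∧ B' = (gᵀ)⁻¹ * B * h₂⁻¹ := by
  let := NullCone.action ℂ (Fin p) (Fin m) (Fin n)
  have hA := MulAction.orbit_eq_iff.mpr (NullCone.normalForm_mem_orbit hAB)
  have hA' := MulAction.orbit_eq_iff.mpr (NullCone.normalForm_mem_orbit hAB')
  rw [hrA, hrB, hA'] at hA
  obtain ⟨γ, hγ⟩ := MulAction.mem_orbit_iff.mp (MulAction.orbit_eq_iff.mp hA)
  rw [NullCone.action_smul, Prod.mk.injEq] at hγ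
  exact ⟨γ.1, γ.2.1, γ.2.2, γ.1.isUnit, γ.2.1.isUnit, γ.2.2.isUnit,
    hγ.1.symm, hγ.2.symm⟩

/-- In the stable range `m + n ≤ p`, two pairs in the null cone
`{(A,B) ∈ M_{p,m}(ℂ) × M_{p,n}(ℂ) : AᵀB = 0}` with the same pair of ranks lie in
the same `GL_p(ℂ) × (GL_m(ℂ) × GL_n(ℂ))`-orbit under the action
`(g,h₁,h₂)·(A,B) = (gAh₁ᵀ, (gᵀ)⁻¹Bh₂⁻¹)`. -/
theorem nullConeU_orbits_classified_by_rank (p m n : ℕ) (hp : 0 < p) (hm : 0 < m)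
    (hn : 0 < n) (h : m + n ≤ p)
    (A A' : Matrix (Fin p) (Fin m) ℂ) (B B' : Matrix (Fin p) (Fin n) ℂ)
    (hAB : Aᵀ * B = 0) (hAB' : A'ᵀ * B' = 0)
    (hrA : A.rank = A'.rank) (hrB : B.rank = B'.rank) :
    ∃ (g : Matrix (Fin p) (Fin p) ℂ) (h₁ : Matrix (Fin m) (Fin m) ℂ)
      (h₂ : Matrix (Fin n) (Fin n) ℂ),
      IsUnit g ∧ IsUnit h₁ ∧ IsUnit h₂ ∧
        A' = g * A * h₁ᵀ ∧ B' = (gᵀ)⁻¹ * B * h₂⁻¹ :=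
  nullConeU_orbits_classified_by_rank_general p m n A A' B B' hAB hAB' hrA hrB
end

section
/- Let p, n be positive integers with n ≤ p, and let A, A' ∈ M_{2p,n}(ℂ) satisfy AᵀJ_pA = 0, A'ᵀJ_pA' = 0 and rank A = rank A'. Then there exist a complex symplectic matrix k ∈ Sp(2p,ℂ) (i.e. k ∈ M_{2p}(ℂ) with kᵀJ_pk = J_p) and g ∈ GL_n(ℂ) such that A' = k A gᵀ. (That is, the Sp(2p,ℂ) × GL_n(ℂ)-orbits in the null cone {A : AᵀJ_pA = 0} under the action (k,g)·A = kAgᵀ are exactly classified by rank.) -/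
open Matrix

/-- The standard symplectic form matrix `J_p = [[0, 1_p], [-1_p, 0]]`
of size `2p × 2p`. -/
noncomputable def Jmat (p : ℕ) : Matrix (Fin (2 * p)) (Fin (2 * p)) ℂ :=
  Matrix.of fun i j =>
    if (i : ℕ) + p = (j : ℕ) then 1
    else if (j : ℕ) + p = (i : ℕ) then -1
    else 0

/-!
The column space of a matrix in the null cone is isotropic for `ω(x, y) = xᵀ J y`, and its
dimension `r = rank A` is at most `n ≤ p`. A linearly independent isotropic family of length
`r < p` can be lengthened: its `ω`-orthogonal has dimension `2p - r > r`, so it is not contained in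
the span of the family. Hence every isotropic frame extends to a Lagrangian frame `U`, and `U`
completes to a symplectic matrix `[U | W]`: take any `W₀` with `Uᵀ J W₀ = 1` and correct it by
half of the defect `W₀ᵀ J W₀`. So `Sp(2p)` acts transitively on isotropic subspaces of a given
dimension, and some `k` maps the column space of `A` onto that of `A'`. Matrices with the same
column space differ by an invertible factor on the right.
-/

open Module

section LinearAlgebra

theorem span_range_subtype_comp_basis {R M ι : Type*} [Semiring R] [AddCommMonoid M] [Module R M]
    {W : Submodule R M} (b : Basis ι R W) : Submodule.span R (Set.range (W.subtype ∘ b)) = W := by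
  rw [Set.range_comp, Submodule.span_image, b.span_eq, Submodule.map_top, Submodule.range_subtype]

theorem LinearMap.exists_linearEquiv_comp_eq_of_ker_eq {K V W : Type*} [DivisionRing K]
    [AddCommGroup V] [Module K V] [AddCommGroup W] [Module K W] [FiniteDimensional K W]
    {f f' : V →ₗ[K] W} (h : ker f = ker f') : ∃ g : W ≃ₗ[K] W, g.toLinearMap ∘ₗ f = f' := by
  let e : range f ≃ₗ[K] range f' :=
    f.quotKerEquivRange.symm ≪≫ₗ Submodule.quotEquivOfEq _ _ h ≪≫ₗ f'.quotKerEquivRange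
  obtain ⟨g, hg⟩ := Submodule.exists_linearEquiv_restrict_eq e
  refine ⟨g, LinearMap.ext fun v => ?_⟩
  simpa [e, quotKerEquivRange_symm_apply_image] using (hg ⟨f v, mem_range_self f v⟩).symm

namespace Matrix

variable {m n K : Type*} [Fintype m] [Fintype n] [DecidableEq n]

theorem mem_ker_mulVecLin_transpose_iff [CommSemiring K] {B : Matrix m n K} {y : m → K} :
    y ∈ LinearMap.ker Bᵀ.mulVecLin ↔ ∀ z ∈ LinearMap.range B.mulVecLin, y ⬝ᵥ z = 0 := by
  simp only [LinearMap.mem_ker, LinearMap.mem_range, forall_exists_index, forall_apply_eq_imp_iff,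
    mulVecLin_apply, mulVec_transpose, dotProduct_mulVec]
  exact ⟨fun h x => by rw [h, zero_dotProduct],
    fun h => funext fun i => by simpa using h (Pi.single i 1)⟩

theorem exists_isUnit_eq_mul_of_ker_eq [DecidableEq m] [Field K] {B B' : Matrix n m K}
    (h : LinearMap.ker B.mulVecLin = LinearMap.ker B'.mulVecLin) :
    ∃ g : Matrix n n K, IsUnit g ∧ B' = g * B := by
  obtain ⟨g, hg⟩ := LinearMap.exists_linearEquiv_comp_eq_of_ker_eq h
  refine ⟨LinearMap.toMatrix' g.toLinearMap,
    LinearMap.isUnit_toMatrix'_iff.mpr ((End.isUnit_iff _).mpr g.bijective), ?_⟩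
  rw [← LinearMap.toMatrix'_toLin' B', toLin'_apply', ← hg, LinearMap.toMatrix'_comp,
    ← toLin'_apply', LinearMap.toMatrix'_toLin']

theorem exists_isUnit_eq_mul_transpose_of_range_eq [DecidableEq m] [Field K] {B B' : Matrix m n K}
    (h : LinearMap.range B.mulVecLin = LinearMap.range B'.mulVecLin) :
    ∃ g : Matrix n n K, IsUnit g ∧ B' = B * gᵀ := by
  obtain ⟨g, hg, hB⟩ := exists_isUnit_eq_mul_of_ker_eq (B := Bᵀ) (B' := B'ᵀ) (by
    ext y
    simp only [mem_ker_mulVecLin_transpose_iff, h])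
  exact ⟨g, hg, by rw [← transpose_transpose B', hB, transpose_mul, transpose_transpose]⟩

end Matrix

end LinearAlgebra

section CommRing

variable {l R : Type*} [Fintype l] [DecidableEq l] [CommRing R]

theorem dotProduct_J_mulVec_self (x : l ⊕ l → R) : x ⬝ᵥ J l R *ᵥ x = 0 := by
  simp [J, fromBlocks_mulVec, dotProduct, Fintype.sum_sum_type, neg_mulVec, mul_comm]

theorem dotProduct_J_mulVec_comm (x y : l ⊕ l → R) :
    x ⬝ᵥ J l R *ᵥ y = -(y ⬝ᵥ J l R *ᵥ x) := by
  rw [dotProduct_mulVec, ← mulVec_transpose, J_transpose, neg_mulVec, dotProduct_comm,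
    dotProduct_neg]

theorem transpose_mul_J_mul {m n : Type*} (P : Matrix (l ⊕ l) m R) (Q : Matrix (l ⊕ l) n R) :
    (Pᵀ * J l R * Q)ᵀ = -(Qᵀ * J l R * P) := by
  simp [transpose_mul, J_transpose, Matrix.mul_assoc]

theorem SymplecticGroup.inv_mem {A : Matrix (l ⊕ l) (l ⊕ l) R} (hA : A ∈ symplecticGroup l R) :
    A⁻¹ ∈ symplecticGroup l R := by
  simpa [SymplecticGroup.coe_inv'] using (⟨A, hA⟩⁻¹ : symplecticGroup l R).2

def IsIsotropic (W : Submodule R (l ⊕ l → R)) : Prop :=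
  ∀ x ∈ W, ∀ y ∈ W, x ⬝ᵥ J l R *ᵥ y = 0

def IsIsotropicFrame {ι : Type*} (v : ι → l ⊕ l → R) : Prop :=
  LinearIndependent R v ∧ ∀ i j, v i ⬝ᵥ J l R *ᵥ v j = 0

theorem IsIsotropic.isIsotropicFrame_basis {W : Submodule R (l ⊕ l → R)} (hW : IsIsotropic W)
    {ι : Type*} (b : Basis ι R W) : IsIsotropicFrame (W.subtype ∘ b) :=
  ⟨b.linearIndependent.map' W.subtype W.ker_subtype, fun i j => hW _ (b i).2 _ (b j).2⟩

theorem isIsotropic_range {n : Type*} [Fintype n] {B : Matrix (l ⊕ l) n R}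
    (hB : Bᵀ * J l R * B = 0) : IsIsotropic (LinearMap.range B.mulVecLin) := by
  rintro _ ⟨x, rfl⟩ _ ⟨y, rfl⟩
  calc B *ᵥ x ⬝ᵥ J l R *ᵥ B *ᵥ y = x ⬝ᵥ (Bᵀ * J l R * B) *ᵥ y := by
        rw [← mulVec_mulVec, ← mulVec_mulVec, dotProduct_mulVec x Bᵀ, vecMul_transpose]
    _ = 0 := by rw [hB, zero_mulVec, dotProduct_zero]

end CommRing

section Field

variable {l K : Type*} [Fintype l] [DecidableEq l] [Field K]

theorem IsIsotropicFrame.exists_succ {r : ℕ} {v : Fin r → l ⊕ l → K} (hv : IsIsotropicFrame v)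
    (hr : r < Fintype.card l) :
    ∃ u : Fin (r + 1) → l ⊕ l → K, IsIsotropicFrame u ∧ ∀ j, u j.castSucc = v j := by
  set φ := (Matrix.of v * J l K).mulVecLin
  have hφ : ∀ w i, φ w i = v i ⬝ᵥ J l K *ᵥ w := fun w i => by simp [φ, mulVec]
  have hker : ¬ LinearMap.ker φ ≤ Submodule.span K (Set.range v) := by
    intro hle
    have h1 := Submodule.finrank_mono hle
    have h2 := φ.finrank_range_add_finrank_ker
    have h3 := Submodule.finrank_le (LinearMap.range φ)
    rw [finrank_span_eq_card hv.1] at h1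
    simp only [finrank_fintype_fun_eq_card, Fintype.card_sum, Fintype.card_fin] at h1 h2 h3
    omega
  obtain ⟨w, hwφ, hwv⟩ := SetLike.not_le_iff_exists.mp hker
  have hw : ∀ i, v i ⬝ᵥ J l K *ᵥ w = 0 := fun i => by
    rw [← hφ, LinearMap.mem_ker.mp hwφ, Pi.zero_apply]
  refine ⟨Fin.snoc v w, ⟨linearIndependent_finSnoc.mpr ⟨hv.1, hwv⟩, fun i j => ?_⟩,
    fun j => Fin.snoc_castSucc ..⟩
  induction i using Fin.lastCases <;> induction j using Fin.lastCases <;>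
    simp only [Fin.snoc_last, Fin.snoc_castSucc, dotProduct_J_mulVec_self, hv.2, hw]
  rw [dotProduct_J_mulVec_comm, hw, neg_zero]

theorem IsIsotropicFrame.exists_lagrangian {p r : ℕ} {v : Fin r → Fin p ⊕ Fin p → K}
    (hv : IsIsotropicFrame v) (hrp : r ≤ p) :
    ∃ u : Fin p → Fin p ⊕ Fin p → K, IsIsotropicFrame u ∧ ∀ j, u (Fin.castLE hrp j) = v j := by
  induction hd : p - r generalizing r with
  | zero =>
    obtain rfl : r = p := by omega
    exact ⟨v, hv, fun j => rfl⟩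
  | succ d ih =>
    obtain ⟨w, hw, hwv⟩ := hv.exists_succ (by rw [Fintype.card_fin]; omega)
    obtain ⟨u, hu, huw⟩ := ih hw (by omega) (by omega)
    exact ⟨u, hu, fun j => by simpa [hwv] using huw j.castSucc⟩

theorem exists_fromCols_mem_symplecticGroup [NeZero (2 : K)] {U : Matrix (l ⊕ l) l K}
    (hU : LinearIndependent K Uᵀ) (hiso : Uᵀ * J l K * U = 0) :
    ∃ W, fromCols U W ∈ symplecticGroup l K := by
  obtain ⟨W₀, hW₀⟩ : ∃ W₀ : Matrix (l ⊕ l) l K, Uᵀ * J l K * W₀ = 1 := by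
    rw [← mulVec_surjective_iff_exists_right_inverse, ← coe_mulVecLin, ← LinearMap.range_eq_top]
    apply Submodule.eq_top_of_finrank_eq
    rw [finrank_fintype_fun_eq_card, ← rank,
      rank_mul_eq_left_of_isUnit_det _ _ (isUnit_det_J l K), rank_eq_finrank_span_row]
    exact finrank_span_eq_card hU
  set M := W₀ᵀ * J l K * W₀
  have hW₀U : W₀ᵀ * J l K * U = -1 := by
    rw [← neg_neg (W₀ᵀ * J l K * U), ← transpose_mul_J_mul, hW₀, transpose_one]
  have hM : Mᵀ = -M := transpose_mul_J_mul W₀ W₀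
  set W := -W₀ - (2 : K)⁻¹ • (U * M)
  have hUW : Uᵀ * J l K * W = -1 := by
    simp only [W, Matrix.mul_sub, Matrix.mul_neg, Matrix.mul_smul, hW₀, ← Matrix.mul_assoc, hiso]
    simp
  have hWU : Wᵀ * J l K * U = 1 := by
    rw [← neg_neg (Wᵀ * J l K * U), ← transpose_mul_J_mul, hUW, transpose_neg, transpose_one,
      neg_neg]
  have hWW : Wᵀ * J l K * W = 0 := by
    have h1 : Uᵀ * (J l K * (U * M)) = 0 := by
      rw [← Matrix.mul_assoc, ← Matrix.mul_assoc, hiso, zero_mul]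
    have h2 : Uᵀ * (J l K * W₀) = 1 := by rw [← Matrix.mul_assoc, hW₀]
    have h3 : W₀ᵀ * (J l K * (U * M)) = -M := by
      rw [← Matrix.mul_assoc, ← Matrix.mul_assoc, hW₀U, neg_one_mul]
    have h4 : W₀ᵀ * (J l K * W₀) = M := (Matrix.mul_assoc _ _ _).symm
    simp only [W, transpose_sub, transpose_neg, transpose_smul, transpose_mul, Matrix.sub_mul,
      Matrix.mul_sub, Matrix.neg_mul, Matrix.mul_neg, Matrix.smul_mul, Matrix.mul_smul,
      Matrix.mul_assoc, h1, h2, h3, h4, hM, Matrix.mul_one, Matrix.mul_zero]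
    match_scalars
    field_simp
    ring
  refine ⟨W, SymplecticGroup.mem_iff'.mpr ?_⟩
  rw [transpose_fromCols, fromRows_mul, fromRows_mul_fromCols, hiso, hUW, hWU, hWW]
  rfl

theorem IsIsotropicFrame.exists_mem_symplecticGroup [NeZero (2 : K)] {p r : ℕ}
    {v : Fin r → Fin p ⊕ Fin p → K} (hv : IsIsotropicFrame v) (hrp : r ≤ p) :
    ∃ k ∈ symplecticGroup (Fin p) K, ∀ j, k *ᵥ Pi.single (Sum.inl (Fin.castLE hrp j)) 1 = v j := by
  obtain ⟨u, hu, huv⟩ := hv.exists_lagrangian hrp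
  obtain ⟨W, hW⟩ := exists_fromCols_mem_symplecticGroup (U := (Matrix.of u)ᵀ) hu.1 (by
    ext i j
    rw [transpose_transpose, Matrix.zero_apply, mul_apply', ← hu.2 i j, dotProduct_mulVec]
    rfl)
  exact ⟨_, hW, fun j => by ext i; simp [huv]⟩

theorem exists_mem_symplecticGroup_map_eq [NeZero (2 : K)] {p : ℕ}
    {W W' : Submodule K (Fin p ⊕ Fin p → K)} (hW : IsIsotropic W) (hW' : IsIsotropic W')
    (hdim : finrank K W = finrank K W') (hp : finrank K W ≤ p) :
    ∃ k ∈ symplecticGroup (Fin p) K, W.map k.mulVecLin = W' := by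
  let b := finBasisOfFinrankEq K W rfl
  let b' := finBasisOfFinrankEq K W' hdim.symm
  obtain ⟨k₁, hk₁, hv⟩ := (hW.isIsotropicFrame_basis b).exists_mem_symplecticGroup hp
  obtain ⟨k₂, hk₂, hv'⟩ := (hW'.isIsotropicFrame_basis b').exists_mem_symplecticGroup hp
  refine ⟨k₂ * k₁⁻¹, mul_mem hk₂ (SymplecticGroup.inv_mem hk₁), ?_⟩
  have hcomp : (k₂ * k₁⁻¹).mulVecLin ∘ (W.subtype ∘ b) = W'.subtype ∘ b' := by
    funext j
    rw [Function.comp_apply, mulVecLin_apply, ← hv, ← hv', ← mulVec_mulVec, mulVec_mulVec _ k₁⁻¹,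
      nonsing_inv_mul _ (SymplecticGroup.symplectic_det hk₁), one_mulVec]
  rw [← span_range_subtype_comp_basis b, Submodule.map_span, ← Set.range_comp, hcomp,
    span_range_subtype_comp_basis]

theorem exists_mem_symplecticGroup_mul_mul_transpose_eq [NeZero (2 : K)] {p : ℕ} {n : Type*}
    [Fintype n] [DecidableEq n] (hn : Fintype.card n ≤ p) {B B' : Matrix (Fin p ⊕ Fin p) n K}
    (hB : Bᵀ * J (Fin p) K * B = 0) (hB' : B'ᵀ * J (Fin p) K * B' = 0)
    (hrank : B.rank = B'.rank) :
    ∃ k ∈ symplecticGroup (Fin p) K, ∃ g : Matrix n n K, IsUnit g ∧ B' = k * B * gᵀ := by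
  obtain ⟨k, hk, hmap⟩ := exists_mem_symplecticGroup_map_eq (isIsotropic_range hB)
    (isIsotropic_range hB') hrank ((rank_le_card_width B).trans hn)
  obtain ⟨g, hg, hkg⟩ := exists_isUnit_eq_mul_transpose_of_range_eq (B := k * B) (B' := B')
    (by rw [mulVecLin_mul, LinearMap.range_comp, hmap])
  exact ⟨k, hk, g, hg, hkg⟩

end Field

def finSumFinTwoMulEquiv (p : ℕ) : Fin p ⊕ Fin p ≃ Fin (2 * p) :=
  finSumFinEquiv.trans (finCongr (two_mul p).symm)

-- Mathlib's `J` is `[[0, -1], [1, 0]]`, the negative of `J_p`; neither the symplectic group nor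
-- the null cone sees the sign.
theorem J_eq_neg_submatrix_Jmat (p : ℕ) :
    J (Fin p) ℂ = -(Jmat p).submatrix (finSumFinTwoMulEquiv p) (finSumFinTwoMulEquiv p) := by
  ext (i | i) (j | j) <;>
    simp only [Jmat, J, finSumFinTwoMulEquiv, Equiv.coe_trans, Function.comp_apply, submatrix_apply,
      of_apply, Matrix.neg_apply, fromBlocks_apply₁₁, fromBlocks_apply₁₂, fromBlocks_apply₂₁,
      fromBlocks_apply₂₂, Matrix.zero_apply, one_apply, finSumFinEquiv_apply_left,
      finSumFinEquiv_apply_right, finCongr_apply, Fin.natAdd_eq_addNat, Fin.ext_iff, Fin.val_cast,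
      Fin.val_castAdd, Fin.val_addNat, Nat.add_right_cancel_iff, neg_inj, zero_eq_neg] <;>
    split_ifs <;> first | rfl | omega | simp

theorem transpose_submatrix_mul_J_mul_submatrix {p : ℕ} {m n : Type*}
    (C : Matrix (Fin (2 * p)) m ℂ) (D : Matrix (Fin (2 * p)) n ℂ) :
    (C.submatrix (finSumFinTwoMulEquiv p) id)ᵀ * J (Fin p) ℂ *
      D.submatrix (finSumFinTwoMulEquiv p) id = -(Cᵀ * Jmat p * D) := by
  rw [J_eq_neg_submatrix_Jmat, transpose_submatrix, Matrix.mul_neg, Matrix.neg_mul,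
    submatrix_mul_equiv, submatrix_mul_equiv, submatrix_id_id]

theorem transpose_mul_Jmat_mul_of_mem_symplecticGroup {p : ℕ}
    {k : Matrix (Fin p ⊕ Fin p) (Fin p ⊕ Fin p) ℂ} (hk : k ∈ symplecticGroup (Fin p) ℂ) :
    (k.submatrix (finSumFinTwoMulEquiv p).symm (finSumFinTwoMulEquiv p).symm)ᵀ * Jmat p *
      k.submatrix (finSumFinTwoMulEquiv p).symm (finSumFinTwoMulEquiv p).symm = Jmat p := by
  have hJ : Jmat p = (-J (Fin p) ℂ).submatrix (finSumFinTwoMulEquiv p).symm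
      (finSumFinTwoMulEquiv p).symm := by
    simp [J_eq_neg_submatrix_Jmat]
  rw [hJ, transpose_submatrix, submatrix_mul_equiv, submatrix_mul_equiv, Matrix.mul_neg,
    Matrix.neg_mul, SymplecticGroup.mem_iff'.mp hk]

theorem nullConeSp_orbits_classified_by_rank_general (p n : ℕ)
    (h : n ≤ p) (A A' : Matrix (Fin (2 * p)) (Fin n) ℂ)
    (hA : Aᵀ * Jmat p * A = 0) (hA' : A'ᵀ * Jmat p * A' = 0)
    (hrank : A.rank = A'.rank) :
    ∃ (k : Matrix (Fin (2 * p)) (Fin (2 * p)) ℂ) (g : Matrix (Fin n) (Fin n) ℂ),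
      kᵀ * Jmat p * k = Jmat p ∧ IsUnit g ∧ A' = k * A * gᵀ := by
  set e := finSumFinTwoMulEquiv p
  have hiso : ∀ C : Matrix (Fin (2 * p)) (Fin n) ℂ, Cᵀ * Jmat p * C = 0 →
      (C.submatrix e id)ᵀ * J (Fin p) ℂ * C.submatrix e id = 0 := fun C hC => by
    rw [transpose_submatrix_mul_J_mul_submatrix, hC, neg_zero]
  have hrank_e : (A.submatrix e id).rank = (A'.submatrix e id).rank :=
    (rank_submatrix A e (Equiv.refl _)).trans (hrank.trans (rank_submatrix A' e (Equiv.refl _)).symm)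
  obtain ⟨k, hk, g, hg, hkg⟩ := exists_mem_symplecticGroup_mul_mul_transpose_eq
    (by rwa [Fintype.card_fin]) (hiso A hA) (hiso A' hA') hrank_e
  refine ⟨k.submatrix e.symm e.symm, g, transpose_mul_Jmat_mul_of_mem_symplecticGroup hk, hg, ?_⟩
  calc A' = (A'.submatrix e id).submatrix e.symm id := by simp
    _ = (k * A.submatrix e id).submatrix e.symm id * gᵀ := by
      rw [hkg, submatrix_mul _ _ _ id _ Function.bijective_id, submatrix_id_id]
    _ = k.submatrix e.symm e.symm * A * gᵀ := by
      rw [← submatrix_mul_equiv _ _ _ e.symm]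
      simp

/-- In the stable range `n ≤ p`, two matrices in the null cone
`{A ∈ M_{2p,n}(ℂ) : AᵀJ_pA = 0}` of the same rank lie in the same
`Sp(2p,ℂ) × GL_n(ℂ)`-orbit under the action `(k,g)·A = kAgᵀ`. -/
theorem nullConeSp_orbits_classified_by_rank (p n : ℕ) (hp : 0 < p) (hn : 0 < n)
    (h : n ≤ p) (A A' : Matrix (Fin (2 * p)) (Fin n) ℂ)
    (hA : Aᵀ * Jmat p * A = 0) (hA' : A'ᵀ * Jmat p * A' = 0)
    (hrank : A.rank = A'.rank) :
    ∃ (k : Matrix (Fin (2 * p)) (Fin (2 * p)) ℂ) (g : Matrix (Fin n) (Fin n) ℂ),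
      kᵀ * Jmat p * k = Jmat p ∧ IsUnit g ∧ A' = k * A * gᵀ :=
  nullConeSp_orbits_classified_by_rank_general p n h A A' hA hA' hrank
end

section
/- Let p, n be positive integers with 2n < p. Let R = ℂ[x_{k,i} : 1 ≤ k ≤ p, 1 ≤ i ≤ n] be the polynomial ring corresponding to the entries of a matrix A ∈ M_{p,n}(ℂ), and let S ⊆ R be the ℂ-subalgebra generated by the quadratic invariants q_{i,j} = ∑_{k=1}^p x_{k,i} x_{k,j} for 1 ≤ i ≤ j ≤ n. Then R is a free module over S. (This realizes the separation of variables ℂ[W⁺] ≅ H(K_C⁺) ⊗ ℂ[W⁺]^{K_C⁺} into harmonics times invariants; in particular R is flat over S, i.e. the moment map ψ⁺(A) = AᵀA is flat.) -/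
/-!
Give the variable `x_{k,i}` the weight `p² - k² + 4ki`. The heaviest monomial of `q_{i,j}` is then
`x_{r,i} x_{r,j}` with `r = i + j`, a row that exists because `2n < p`, and the leading exponents of
different `q_{i,j}` have disjoint supports. Call an exponent standard if no leading exponent
divides it. By disjointness, distinct pairs `(a, b)` with `b` standard give distinct exponents
`∑ a_{ij} ℓ_{ij} + b`, which are the leading exponents of the products `∏ q_{ij}^{a_{ij}} · x^b`;
so these products are linearly independent over `ℂ`, and reducing leading terms shows that they
span `ℂ[x]`. As the monomials in the `q_{ij}` span the invariant algebra over `ℂ`, the standard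
monomials `x^b` are a basis of `ℂ[x]` over it.
-/

open MvPolynomial

/-- The subalgebra of `ℂ[x_{k,i}] = ℂ[M_{p,n}(ℂ)]` generated by the quadratic
invariants `q_{i,j} = ∑_k x_{k,i} x_{k,j}` for `i ≤ j` (the `O(p,ℂ)`-invariants). -/
noncomputable def quadInvariantsO (p n : ℕ) :
    Subalgebra ℂ (MvPolynomial (Fin p × Fin n) ℂ) :=
  Algebra.adjoin ℂ
    {f | ∃ i j : Fin n, i ≤ j ∧ f = ∑ k : Fin p, X (k, i) * X (k, j)}

open Finsupp Function

section StandardExponents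

variable {σ τ : Type*} (ℓ : τ → σ →₀ ℕ)

def IsStandardExp (b : σ →₀ ℕ) : Prop := ∀ t, ¬ ℓ t ≤ b

variable {ℓ}

theorem linearCombination_apply_of_mem_support
    (hℓ : Pairwise (Disjoint on fun t => (ℓ t).support)) (a : τ →₀ ℕ) {t : τ} {s : σ}
    (hs : s ∈ (ℓ t).support) : linearCombination ℕ ℓ a s = a t * ℓ t s := by
  rw [linearCombination_apply, Finsupp.sum_apply]
  refine (Finsupp.sum_eq_single t (fun t' _ ht' => ?_) (by simp)).trans (by simp)
  have hs' : s ∉ (ℓ t').support := Finset.disjoint_right.mp (hℓ ht') hs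
  simp [Finsupp.notMem_support_iff.mp hs']

theorem le_of_linearCombination_add_eq (hℓ : Pairwise (Disjoint on fun t => (ℓ t).support))
    {a a' : τ →₀ ℕ} {b b' : σ →₀ ℕ}
    (h : linearCombination ℕ ℓ a + b = linearCombination ℕ ℓ a' + b') {t : τ}
    (ht : a t < a' t) : ℓ t ≤ b := by
  intro s
  by_cases hs : s ∈ (ℓ t).support
  · have hs' := DFunLike.congr_fun h s
    simp only [Finsupp.add_apply, linearCombination_apply_of_mem_support hℓ _ hs] at hs'
    nlinarith
  · simp [Finsupp.notMem_support_iff.mp hs]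

theorem injective_linearCombination_add (hℓ : Pairwise (Disjoint on fun t => (ℓ t).support)) :
    Injective fun x : (τ →₀ ℕ) × {b // IsStandardExp ℓ b} =>
      linearCombination ℕ ℓ x.1 + x.2.1 := by
  rintro ⟨a, b, hb⟩ ⟨a', b', hb'⟩ h
  obtain rfl : a = a' := by
    ext t
    by_contra hne
    rcases lt_or_gt_of_ne hne with hlt | hlt
    · exact hb t (le_of_linearCombination_add_eq hℓ h hlt)
    · exact hb' t (le_of_linearCombination_add_eq hℓ h.symm hlt)
  exact Prod.ext rfl (Subtype.ext (add_left_cancel h))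

end StandardExponents

theorem Algebra.toSubmodule_adjoin_range_eq_span_finsuppProd {R A τ : Type*} [CommSemiring R]
    [CommSemiring A] [Algebra R A] (q : τ → A) :
    Subalgebra.toSubmodule (Algebra.adjoin R (Set.range q))
      = Submodule.span R (Set.range fun a : τ →₀ ℕ => a.prod (q · ^ ·)) := by
  rw [Algebra.adjoin_eq_span]
  congr 1
  ext x
  simp [Submonoid.mem_closure_range_iff, eq_comm]

namespace Subalgebra

variable {K A ι κ : Type*} [CommRing K] [CommRing A] [Algebra K A] (S : Subalgebra K A)
  {b : ι → A} {c : κ → A}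

theorem linearIndependent_of_linearIndependent_mul
    (hS : Subalgebra.toSubmodule S = Submodule.span K (Set.range b))
    (hbc : LinearIndependent K fun x : ι × κ => b x.1 * c x.2) : LinearIndependent S c := by
  classical
  rw [linearIndependent_iff']
  intro s g hg j hj
  have hrepr (j : κ) : ∃ f : ι →₀ K, (f.sum fun i r => r • b i) = g j :=
    Finsupp.mem_span_range_iff_exists_finsupp.mp (hS ▸ (g j).2)
  choose f hf using hrepr
  set U := s.biUnion fun j => (f j).support
  have hfU (j : κ) (hj : j ∈ s) : ∑ i ∈ U, f j i • b i = g j := by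
    rw [← hf j, Finsupp.sum_of_support_subset _
      (Finset.subset_biUnion_of_mem (fun j => (f j).support) hj) _ (by simp)]
  have hzero := linearIndependent_iff'.mp hbc (U ×ˢ s) (fun x => f x.2 x.1) <| by
    rw [Finset.sum_product_right]
    calc ∑ j ∈ s, ∑ i ∈ U, f j i • (b i * c j) = ∑ j ∈ s, ∑ i ∈ U, f j i • b i * c j := by
          simp only [smul_mul_assoc]
      _ = ∑ j ∈ s, (g j : A) * c j := by
          refine Finset.sum_congr rfl fun j hj => ?_
          rw [← Finset.sum_mul, hfU j hj]
      _ = 0 := hg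
  refine Subtype.ext ?_
  rw [← hfU j hj]
  exact Finset.sum_eq_zero fun i hi => by
    rw [hzero (i, j) (Finset.mem_product.mpr ⟨hi, hj⟩), zero_smul]

theorem span_eq_top_of_span_mul_eq_top (hb : ∀ i, b i ∈ S)
    (hbc : Submodule.span K (Set.range fun x : ι × κ => b x.1 * c x.2) = ⊤) :
    Submodule.span S (Set.range c) = ⊤ := by
  refine eq_top_iff.mpr fun m _ => ?_
  have hle : Submodule.span K (Set.range fun x : ι × κ => b x.1 * c x.2)
      ≤ (Submodule.span S (Set.range c)).restrictScalars K := by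
    rw [Submodule.span_le]
    rintro _ ⟨⟨i, j⟩, rfl⟩
    exact (Submodule.span S _).smul_mem ⟨b i, hb i⟩ (Submodule.subset_span ⟨j, rfl⟩)
  exact hle (hbc ▸ Submodule.mem_top)

end Subalgebra

theorem mul_mem_span_finsuppProd_mul {R A τ κ : Type*} [CommSemiring R] [CommSemiring A]
    [Algebra R A] {q : τ → A} {c : κ → A} (t : τ) {m : A}
    (hm : m ∈ Submodule.span R (Set.range fun x : (τ →₀ ℕ) × κ => x.1.prod (q · ^ ·) * c x.2)) :
    q t * m ∈ Submodule.span R (Set.range fun x : (τ →₀ ℕ) × κ => x.1.prod (q · ^ ·) * c x.2) := by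
  classical
  induction hm using Submodule.span_induction with
  | mem _ hx =>
    obtain ⟨⟨a, j⟩, rfl⟩ := hx
    refine Submodule.subset_span ⟨(a + single t 1, j), ?_⟩
    dsimp only
    rw [Finsupp.prod_add_index' (fun _ => pow_zero _) (fun _ => pow_add _),
      prod_single_index (h := fun t k => q t ^ k) (pow_zero _), pow_one]
    ring
  | zero => simp
  | add _ _ _ _ hx hy => rw [mul_add]; exact Submodule.add_mem _ hx hy
  | smul r _ _ hx => rw [mul_smul_comm]; exact Submodule.smul_mem _ r hx

namespace MvPolynomial

variable {R σ : Type*} (w : σ → ℕ)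

section CommSemiring

variable [CommSemiring R]

def HasMonicLeadingExp (f : MvPolynomial σ R) (e : σ →₀ ℕ) : Prop :=
  coeff e f = 1 ∧ ∀ μ ∈ f.support, μ ≠ e → weight w μ < weight w e

variable {w}

theorem hasMonicLeadingExp_monomial (e : σ →₀ ℕ) :
    HasMonicLeadingExp w (monomial e (1 : R)) e :=
  ⟨by classical rw [coeff_monomial, if_pos rfl],
    fun _ hμ hne => absurd (Finset.mem_singleton.mp (support_monomial_subset hμ)) hne⟩

theorem hasMonicLeadingExp_one : HasMonicLeadingExp w (1 : MvPolynomial σ R) 0 :=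
  hasMonicLeadingExp_monomial 0

namespace HasMonicLeadingExp

variable {f g : MvPolynomial σ R} {e e' μ : σ →₀ ℕ}

theorem weight_le (hf : HasMonicLeadingExp w f e) (hμ : μ ∈ f.support) :
    weight w μ ≤ weight w e := by
  rcases eq_or_ne μ e with rfl | hne
  · rfl
  · exact (hf.2 μ hμ hne).le

theorem coeff_eq_zero (hf : HasMonicLeadingExp w f e) (hμ : μ ≠ e)
    (hw : weight w e ≤ weight w μ) : coeff μ f = 0 :=
  notMem_support_iff.mp fun hmem => (hf.2 μ hmem hμ).not_ge hw

theorem weight_add_lt (hf : HasMonicLeadingExp w f e) (hg : HasMonicLeadingExp w g e')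
    {μ ν : σ →₀ ℕ} (hμ : μ ∈ f.support) (hν : ν ∈ g.support) (hne : (μ, ν) ≠ (e, e')) :
    weight w (μ + ν) < weight w (e + e') := by
  rw [map_add, map_add]
  by_cases hμe : μ = e
  · subst hμe
    have := hg.2 ν hν fun h => hne (by rw [h])
    omega
  · have := hf.2 μ hμ hμe
    have := hg.weight_le hν
    omega

theorem mul (hf : HasMonicLeadingExp w f e) (hg : HasMonicLeadingExp w g e') :
    HasMonicLeadingExp w (f * g) (e + e') := by
  classical
  constructor
  · rw [coeff_mul, Finset.sum_eq_single (e, e'), hf.1, hg.1, one_mul]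
    · rintro ⟨μ, ν⟩ hμν hne
      rw [Finset.HasAntidiagonal.mem_antidiagonal] at hμν
      by_contra h0
      have hμ : μ ∈ f.support := mem_support_iff.mpr (left_ne_zero_of_mul h0)
      have hν : ν ∈ g.support := mem_support_iff.mpr (right_ne_zero_of_mul h0)
      exact (hf.weight_add_lt hg hμ hν hne).ne (by rw [hμν])
    · simp
  · intro μ' hμ' hne
    obtain ⟨μ, hμ, ν, hν, rfl⟩ := Finset.mem_add.mp (support_mul f g hμ')
    exact hf.weight_add_lt hg hμ hν fun h => hne (by simp_all)

theorem pow (hf : HasMonicLeadingExp w f e) (k : ℕ) :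
    HasMonicLeadingExp w (f ^ k) (k • e) := by
  induction k with
  | zero => simpa using hasMonicLeadingExp_one
  | succ k ih => rw [pow_succ, succ_nsmul]; exact ih.mul hf

end HasMonicLeadingExp

theorem hasMonicLeadingExp_prod {ι : Type*} {s : Finset ι} {f : ι → MvPolynomial σ R}
    {e : ι → σ →₀ ℕ} (h : ∀ i ∈ s, HasMonicLeadingExp w (f i) (e i)) :
    HasMonicLeadingExp w (∏ i ∈ s, f i) (∑ i ∈ s, e i) := by
  classical
  induction s using Finset.induction_on with
  | empty => exact hasMonicLeadingExp_one
  | insert i s hi ih =>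
    rw [Finset.prod_insert hi, Finset.sum_insert hi]
    exact (h i (s.mem_insert_self i)).mul (ih fun j hj => h j (Finset.mem_insert_of_mem hj))

theorem hasMonicLeadingExp_finsuppProd {τ : Type*} {q : τ → MvPolynomial σ R}
    {ℓ : τ → σ →₀ ℕ} (hq : ∀ t, HasMonicLeadingExp w (q t) (ℓ t)) (a : τ →₀ ℕ) :
    HasMonicLeadingExp w (a.prod (q · ^ ·)) (linearCombination ℕ ℓ a) :=
  hasMonicLeadingExp_prod fun t _ => (hq t).pow (a t)

theorem hasMonicLeadingExp_sum_monomial {ι : Type*} {s : Finset ι} {μ : ι → σ →₀ ℕ} {i₀ : ι}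
    (hi₀ : i₀ ∈ s) (hlt : ∀ i ∈ s, i ≠ i₀ → weight w (μ i) < weight w (μ i₀)) :
    HasMonicLeadingExp w (∑ i ∈ s, monomial (μ i) (1 : R)) (μ i₀) := by
  classical
  constructor
  · rw [coeff_sum, Finset.sum_eq_single i₀ (fun i hi hne => ?_) (absurd hi₀), coeff_monomial,
      if_pos rfl]
    rw [coeff_monomial, if_neg fun h => (hlt i hi hne).ne (by rw [h])]
  · intro ν hν hne
    obtain ⟨i, hi, hνi⟩ := Finset.mem_biUnion.mp (support_sum hν)
    rw [Finset.mem_singleton.mp (support_monomial_subset hνi)] at hne ⊢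
    exact hlt i hi fun h => hne (by rw [h])

theorem mul_monomial_mem_of_monomial_add_mem {M : Submodule R (MvPolynomial σ R)}
    {f : MvPolynomial σ R} {e : σ →₀ ℕ} (h : ∀ μ ∈ f.support, monomial (μ + e) 1 ∈ M) :
    f * monomial e 1 ∈ M := by
  rw [f.as_sum, Finset.sum_mul]
  refine Submodule.sum_mem _ fun μ hμ => ?_
  rw [monomial_mul, mul_one, ← mul_one (coeff μ f), ← smul_eq_mul, ← smul_monomial]
  exact M.smul_mem _ (h μ hμ)

end CommSemiring

section CommRing

variable [CommRing R] {w} {τ : Type*} {q : τ → MvPolynomial σ R} {ℓ : τ → σ →₀ ℕ}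

theorem HasMonicLeadingExp.weight_lt_of_mem_support_sub {f : MvPolynomial σ R}
    {e μ : σ →₀ ℕ} (hf : HasMonicLeadingExp w f e) (hμ : μ ∈ (f - monomial e 1).support) :
    weight w μ < weight w e := by
  classical
  rw [mem_support_iff, coeff_sub, coeff_monomial] at hμ
  by_cases hμe : μ = e
  · subst hμe
    simp [hf.1] at hμ
  · rw [if_neg (Ne.symm hμe), sub_zero] at hμ
    exact hf.2 μ (mem_support_iff.mpr hμ) hμe

theorem linearIndependent_of_hasMonicLeadingExp {ι : Type*} {v : ι → MvPolynomial σ R}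
    {E : ι → σ →₀ ℕ} (hE : Injective E) (hv : ∀ i, HasMonicLeadingExp w (v i) (E i)) :
    LinearIndependent R v := by
  classical
  rw [linearIndependent_iff']
  intro s g hg
  by_contra! hne
  obtain ⟨i, hi, hmax⟩ := (s.filter (g · ≠ 0)).exists_max_image (weight w ∘ E)
    (by simpa [Finset.filter_nonempty_iff] using hne)
  rw [Finset.mem_filter] at hi
  -- no other `v j` with `g j ≠ 0` reaches the weight of `E i`, so `g i` is the coefficient of `E i`
  have hcoeff := congrArg (coeff (E i)) hg
  rw [coeff_sum, Finset.sum_eq_single i (fun j hj hji => ?_) (absurd hi.1), coeff_smul,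
    (hv i).1, smul_eq_mul, mul_one, coeff_zero] at hcoeff
  · exact hi.2 hcoeff
  · rw [coeff_smul]
    by_cases hgj : g j = 0
    · rw [hgj, zero_smul]
    · rw [(hv j).coeff_eq_zero (hE.ne hji.symm) (hmax j (Finset.mem_filter.mpr ⟨hj, hgj⟩)),
        smul_zero]

theorem monomial_mem_span_finsuppProd_mul_monomial (hq : ∀ t, HasMonicLeadingExp w (q t) (ℓ t))
    (hpos : ∀ t, 0 < weight w (ℓ t)) (e : σ →₀ ℕ) :
    monomial e 1 ∈ Submodule.span R (Set.range fun x : (τ →₀ ℕ) × {b // IsStandardExp ℓ b} =>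
      x.1.prod (q · ^ ·) * monomial x.2.1 1) := by
  induction hN : weight w e using Nat.strong_induction_on generalizing e with
  | _ N IH =>
  by_cases hstd : IsStandardExp ℓ e
  · exact Submodule.subset_span ⟨(0, ⟨e, hstd⟩), by simp⟩
  obtain ⟨t, hle⟩ := not_forall_not.mp hstd
  obtain ⟨e', rfl⟩ := exists_add_of_le hle
  have hwt : weight w (ℓ t + e') = weight w (ℓ t) + weight w e' := map_add _ _ _
  -- `X ^ ℓ t` is `q t` minus terms of smaller weight
  have hsplit : monomial (ℓ t + e') (1 : R)
      = q t * monomial e' 1 - (q t - monomial (ℓ t) 1) * monomial e' 1 := by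
    rw [show monomial (ℓ t + e') (1 : R) = monomial (ℓ t) 1 * monomial e' 1 by
      rw [monomial_mul, mul_one]]
    ring
  rw [hsplit]
  refine Submodule.sub_mem _ (mul_mem_span_finsuppProd_mul
    (c := fun b : {b // IsStandardExp ℓ b} => monomial b.1 1) t
    (IH _ (by have := hpos t; omega) e' rfl)) ?_
  refine mul_monomial_mem_of_monomial_add_mem fun μ hμ => IH _ ?_ _ rfl
  have := (hq t).weight_lt_of_mem_support_sub hμ
  rw [map_add]
  omega

theorem span_finsuppProd_mul_monomial_eq_top (hq : ∀ t, HasMonicLeadingExp w (q t) (ℓ t))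
    (hpos : ∀ t, 0 < weight w (ℓ t)) :
    Submodule.span R (Set.range fun x : (τ →₀ ℕ) × {b // IsStandardExp ℓ b} =>
      x.1.prod (q · ^ ·) * monomial x.2.1 1) = ⊤ := by
  rw [eq_top_iff, ← (basisMonomials σ R).span_eq, Submodule.span_le]
  rintro _ ⟨e, rfl⟩
  simpa [coe_basisMonomials] using monomial_mem_span_finsuppProd_mul_monomial hq hpos e

theorem free_adjoin_of_hasMonicLeadingExp (hq : ∀ t, HasMonicLeadingExp w (q t) (ℓ t))
    (hpos : ∀ t, 0 < weight w (ℓ t)) (hdisj : Pairwise (Disjoint on fun t => (ℓ t).support)) :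
    Module.Free (Algebra.adjoin R (Set.range q)) (MvPolynomial σ R) := by
  have hS := Algebra.toSubmodule_adjoin_range_eq_span_finsuppProd (R := R) q
  have hmem (a : τ →₀ ℕ) : a.prod (q · ^ ·) ∈ Algebra.adjoin R (Set.range q) :=
    prod_mem fun t _ => pow_mem (Algebra.subset_adjoin (Set.mem_range_self t)) _
  have hindep : LinearIndependent R fun x : (τ →₀ ℕ) × {b // IsStandardExp ℓ b} =>
      x.1.prod (q · ^ ·) * monomial x.2.1 1 :=
    linearIndependent_of_hasMonicLeadingExp (injective_linearCombination_add hdisj) fun x =>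
      (hasMonicLeadingExp_finsuppProd hq x.1).mul (hasMonicLeadingExp_monomial x.2.1)
  have hspan := span_finsuppProd_mul_monomial_eq_top hq hpos
  let c (b : {b // IsStandardExp ℓ b}) : MvPolynomial σ R := monomial b.1 1
  exact .of_basis <| .mk
    (Subalgebra.linearIndependent_of_linearIndependent_mul (c := c) _ hS hindep)
    (Subalgebra.span_eq_top_of_span_mul_eq_top (c := c) _ hmem hspan).ge

end CommRing

end MvPolynomial

noncomputable section QuadraticInvariants

variable (R : Type*) [CommRing R] (p : ℕ) {n : ℕ}

def quadInvariant (i j : Fin n) : MvPolynomial (Fin p × Fin n) R :=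
  ∑ k : Fin p, X (k, i) * X (k, j)

variable {p}

def quadExp (k : Fin p) (i j : Fin n) : Fin p × Fin n →₀ ℕ := single (k, i) 1 + single (k, j) 1

variable (p) in
/-- The weight of `x_{k,i} x_{k,j}` is `2p² - 2k² + 4k(i + j)`, uniquely maximal at `k = i + j`. -/
def orthWeight (s : Fin p × Fin n) : ℕ := p * p - s.1 * s.1 + 4 * s.1 * s.2

def leadingRow (h : 2 * n < p) (i j : Fin n) : Fin p := ⟨i + j, by omega⟩

theorem quadInvariant_eq_sum_monomial (i j : Fin n) :
    quadInvariant R p i j = ∑ k, monomial (quadExp k i j) 1 :=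
  Finset.sum_congr rfl fun k _ => by rw [X, X, monomial_mul, one_mul, quadExp]

theorem weight_quadExp (k : Fin p) (i j : Fin n) :
    weight (orthWeight p) (quadExp k i j) = orthWeight p (k, i) + orthWeight p (k, j) := by
  simp [quadExp, weight_single]

theorem weight_quadExp_pos (k : Fin p) (i j : Fin n) :
    0 < weight (orthWeight p) (quadExp k i j) := by
  have := Nat.mul_self_lt_mul_self k.2
  rw [weight_quadExp]
  simp only [orthWeight]
  omega

theorem weight_quadExp_lt (h : 2 * n < p) {i j : Fin n} {k : Fin p} (hk : k ≠ leadingRow h i j) :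
    weight (orthWeight p) (quadExp k i j)
      < weight (orthWeight p) (quadExp (leadingRow h i j) i j) := by
  have hk' : (k : ℤ) ≠ i + j := fun hc => hk (Fin.ext (by simp [leadingRow]; omega))
  have hsq : 0 < ((k : ℤ) - (i + j)) ^ 2 := by positivity
  have := Nat.mul_self_le_mul_self k.2.le
  have := Nat.mul_self_le_mul_self (leadingRow h i j).2.le
  simp only [weight_quadExp, orthWeight]
  zify [*]
  simp only [leadingRow]
  push_cast
  nlinarith

theorem hasMonicLeadingExp_quadInvariant (h : 2 * n < p) (i j : Fin n) :
    HasMonicLeadingExp (orthWeight p) (quadInvariant R p i j)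
      (quadExp (leadingRow h i j) i j) := by
  rw [quadInvariant_eq_sum_monomial]
  exact hasMonicLeadingExp_sum_monomial (Finset.mem_univ _) fun k _ hk => weight_quadExp_lt h hk

theorem support_quadExp_subset (k : Fin p) (i j : Fin n) :
    (quadExp k i j).support ⊆ {(k, i), (k, j)} := by
  intro s hs
  rcases Finset.mem_union.mp (support_add hs) with hs | hs <;>
    simp [Finset.mem_singleton.mp (support_single_subset hs)]

theorem pairwise_disjoint_support_quadExp_leadingRow (h : 2 * n < p) :
    Pairwise (Disjoint on fun t : {ij : Fin n × Fin n // ij.1 ≤ ij.2} =>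
      (quadExp (leadingRow h t.1.1 t.1.2) t.1.1 t.1.2).support) := by
  rintro ⟨⟨i, j⟩, hij : i ≤ j⟩ ⟨⟨i', j'⟩, hij' : i' ≤ j'⟩ hne
  refine Finset.disjoint_left.mpr fun s hs hs' => hne ?_
  have h1 := support_quadExp_subset _ _ _ hs
  have h2 := support_quadExp_subset _ _ _ hs'
  rw [Fin.le_def] at hij hij'
  simp only [Finset.mem_insert, Finset.mem_singleton] at h1 h2
  rcases h1 with rfl | rfl <;> rcases h2 with h2 | h2 <;>
    simp only [Prod.ext_iff, Fin.ext_iff, leadingRow, Subtype.mk.injEq] at h2 ⊢ <;> omega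

theorem free_adjoin_quadInvariant (h : 2 * n < p) :
    Module.Free (Algebra.adjoin R
        (Set.range fun t : {ij : Fin n × Fin n // ij.1 ≤ ij.2} => quadInvariant R p t.1.1 t.1.2))
      (MvPolynomial (Fin p × Fin n) R) :=
  free_adjoin_of_hasMonicLeadingExp (fun _ => hasMonicLeadingExp_quadInvariant R h _ _)
    (fun _ => weight_quadExp_pos _ _ _) (pairwise_disjoint_support_quadExp_leadingRow h)

end QuadraticInvariants

theorem polynomialRing_free_over_invariants_general (p n : ℕ) (h : 2 * n < p) :
    Module.Free (quadInvariantsO p n) (MvPolynomial (Fin p × Fin n) ℂ) := by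
  have heq : quadInvariantsO p n = Algebra.adjoin ℂ
      (Set.range fun t : {ij : Fin n × Fin n // ij.1 ≤ ij.2} => quadInvariant ℂ p t.1.1 t.1.2) :=
    congrArg _ (Set.ext fun f => by simp [quadInvariant, eq_comm])
  rw [heq]
  exact free_adjoin_quadInvariant ℂ h

/-- Separation of variables for the dual pair `(O(p,q), Sp(2n,ℝ))` in the stable
range `2n < p`: the polynomial ring `ℂ[M_{p,n}(ℂ)]` is a free module over the
subalgebra generated by the quadratic invariants `q_{i,j}`; in particular it is
flat, i.e. the moment map `ψ⁺(A) = AᵀA` is flat. -/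
theorem polynomialRing_free_over_invariants (p n : ℕ) (hp : 0 < p) (hn : 0 < n)
    (h : 2 * n < p) :
    Module.Free (quadInvariantsO p n) (MvPolynomial (Fin p × Fin n) ℂ) :=
  polynomialRing_free_over_invariants_general p n h
end
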